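/- arXiv:1507.01895 — 7 statements merged into one kernel-verified Lean document; each statement's English description precedes it below -/
import Mathlib

section
/- A point x̄ ∈ X is a maximizer of (P) if and only if there exists a vector w in the (topological) interior of the dual cone C⁺ such that x̄ is an optimal solution of the weighted sum scalarized problem (P1(w)), i.e., wᵀPᵀx̄ ≥ wᵀPᵀx for all x ∈ X. -/
/-!
A weight `w` in the interior of `C⁺` is strictly positive on `C \ {0}`, so no point of `X` can
improve on an optimal solution of `(P1(w))`.

Conversely, homogenizing `X` with a scale `t` and a slack `s` shows that maximality of `x̄` makes
the finitely generated cone `K = {(Pᵀx - t Pᵀx̄, Ax + s - t b) | x, s, t ≥ 0}` meet `C × {0}` only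
in `0`. Finitely generated cones are closed (conic Carathéodory), so Farkas' lemma separates
`(0, 1)` from the cone generated by `K × {0}` and the vectors `(-Yᵢ, ‖Yᵢ‖)`, where the `Yᵢ` generate
`C`. The separating functional is `≤ 0` on `K`, which makes `x̄` optimal for its weight `w`, and
strictly positive on every nonzero `Yᵢ`, which puts `w` in the interior of `C⁺`.
-/

open Matrix Pointwise

open Set PointedCone

section Hull

variable {E ι : Type*} [AddCommGroup E] [Module ℝ E] {v : ι → E}

theorem PointedCone.mem_hull_image_finset_iff {s : Finset ι} {x : E} :
    x ∈ hull ℝ (v '' s) ↔ ∃ μ : ι → ℝ, (∀ i ∈ s, 0 ≤ μ i) ∧ ∑ i ∈ s, μ i • v i = x := by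
  rw [Submodule.mem_span_image_finset_iff_exists_fun']
  constructor
  · rintro ⟨c, rfl⟩
    exact ⟨fun i => c i, fun i _ => (c i).2, rfl⟩
  · rintro ⟨μ, hμ, rfl⟩
    refine ⟨fun i => ⟨max (μ i) 0, le_max_right _ _⟩, Finset.sum_congr rfl fun i hi => ?_⟩
    rw [Nonneg.mk_smul, max_eq_left (hμ i hi)]

theorem PointedCone.mem_hull_range_iff [Fintype ι] {x : E} :
    x ∈ hull ℝ (range v) ↔ ∃ μ : ι → ℝ, (∀ i, 0 ≤ μ i) ∧ ∑ i, μ i • v i = x := by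
  simpa using mem_hull_image_finset_iff (v := v) (s := Finset.univ)

theorem PointedCone.eq_zero_of_sum_eq_zero_of_salient {C : PointedCone ℝ E}
    (hC : (C : ConvexCone ℝ E).Salient) {s : Finset ι} {x : ι → E} (hx : ∀ i ∈ s, x i ∈ C)
    (hsum : ∑ i ∈ s, x i = 0) : ∀ i ∈ s, x i = 0 := by
  classical
  intro j hj
  by_contra hne
  refine hC (x j) (hx j hj) hne ?_
  show -x j ∈ C
  rw [neg_eq_of_add_eq_zero_right ((s.add_sum_erase x hj).trans hsum)]
  exact sum_mem fun i hi => hx i (Finset.mem_of_mem_erase hi)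

theorem PointedCone.exists_mem_hull_image_erase_of_not_linearIndepOn [DecidableEq ι]
    {s : Finset ι} (hv : ¬LinearIndepOn ℝ v s) {x : E} (hx : x ∈ hull ℝ (v '' s)) :
    ∃ j ∈ s, x ∈ hull ℝ (v '' (s.erase j)) := by
  obtain ⟨μ, hμ, rfl⟩ := mem_hull_image_finset_iff.1 hx
  obtain ⟨g, hg, i₀, hi₀, hgi₀⟩ : ∃ g : ι → ℝ, ∑ i ∈ s, g i • v i = 0 ∧ ∃ i ∈ s, 0 < g i := by
    simp only [linearIndepOn_finset_iff, not_forall] at hv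
    obtain ⟨g, hg, i, hi, hne⟩ := hv
    rcases Ne.lt_or_gt hne with h | h
    · exact ⟨-g, by simp [neg_smul, hg], i, hi, by simpa using h⟩
    · exact ⟨g, hg, i, hi, h⟩
  -- move from `μ` along `-g` until the first coefficient, `μ j`, vanishes
  obtain ⟨j, hj, hmin⟩ := (s.filter (0 < g ·)).exists_min_image (fun i => μ i / g i)
    ⟨i₀, Finset.mem_filter.2 ⟨hi₀, hgi₀⟩⟩
  obtain ⟨hjs, hgj⟩ := Finset.mem_filter.1 hj
  set t := μ j / g j
  have ht : 0 ≤ t := div_nonneg (hμ j hjs) hgj.le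
  refine ⟨j, hjs, mem_hull_image_finset_iff.2 ⟨fun i => μ i - t * g i, fun i hi => ?_, ?_⟩⟩
  · have his := Finset.mem_of_mem_erase hi
    rcases le_or_gt (g i) 0 with hgi | hgi
    · nlinarith [hμ i his]
    · have := hmin i (Finset.mem_filter.2 ⟨his, hgi⟩)
      rw [le_div_iff₀ hgi] at this
      linarith
  · rw [Finset.sum_erase _ (by simp [t, div_mul_cancel₀ _ hgj.ne'])]
    simp only [sub_smul, Finset.sum_sub_distrib, mul_smul, ← Finset.smul_sum, hg, smul_zero,
      sub_zero]

variable [TopologicalSpace E] [IsTopologicalAddGroup E] [ContinuousSMul ℝ E] [T2Space E]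

theorem PointedCone.isClosed_hull_range_of_linearIndependent [Fintype ι]
    (hv : LinearIndependent ℝ v) : IsClosed (hull ℝ (range v) : Set E) := by
  have hhull : (hull ℝ (range v) : Set E) = Fintype.linearCombination ℝ v '' Ici 0 := by
    ext x
    simp [mem_hull_range_iff, Fintype.linearCombination_apply, Pi.le_def]
  rw [hhull]
  refine (LinearMap.isClosedEmbedding_of_injective ?_).isClosedMap _ isClosed_Ici
  exact LinearMap.ker_eq_bot.2 (linearIndependent_iff_injective_fintypeLinearCombination.1 hv)

theorem PointedCone.isClosed_hull_image_finset (v : ι → E) (s : Finset ι) :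
    IsClosed (hull ℝ (v '' s) : Set E) := by
  classical
  induction s using Finset.strongInduction with
  | H s ih =>
    by_cases hv : LinearIndepOn ℝ v s
    · rw [image_eq_range]
      exact isClosed_hull_range_of_linearIndependent hv
    · have hunion : (hull ℝ (v '' s) : Set E) = ⋃ j ∈ s, hull ℝ (v '' (s.erase j)) := by
        refine Subset.antisymm (fun x hx => ?_) (iUnion₂_subset fun j _ => ?_)
        · simpa using exists_mem_hull_image_erase_of_not_linearIndepOn hv hx
        · exact Submodule.span_mono (image_mono (s.erase_subset j))
      rw [hunion]
      exact isClosed_biUnion_finset fun j hj => ih _ (Finset.erase_ssubset hj)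

theorem PointedCone.isClosed_of_fg {K : PointedCone ℝ E} (hK : K.FG) : IsClosed (K : Set E) := by
  obtain ⟨s, rfl⟩ := hK
  simpa using isClosed_hull_image_finset id s

end Hull

section Separation

variable {V W ι : Type*} [NormedAddCommGroup V] [NormedSpace ℝ V] [NormedAddCommGroup W]
  [NormedSpace ℝ W] [Fintype ι]

theorem PointedCone.exists_separating_strongDual_of_salient {K : PointedCone ℝ V} (hK : K.FG)
    (T : W →ₗ[ℝ] V) (Y : ι → W) (hY : (hull ℝ (range Y) : ConvexCone ℝ W).Salient)
    (hKY : ∀ y ∈ hull ℝ (range Y), T y ∈ K → y = 0) :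
    ∃ f : StrongDual ℝ V, (∀ x ∈ K, f x ≤ 0) ∧ ∀ i, Y i ≠ 0 → 0 < f (T (Y i)) := by
  -- the extra coordinate `‖Y i‖` is what makes `f` strictly positive on each nonzero `Y i`
  set L : PointedCone ℝ (V × ℝ) :=
    K.map (LinearMap.inl ℝ V ℝ) ⊔ hull ℝ (range fun i => (-T (Y i), ‖Y i‖))
  have hL : L.FG := (hK.map _).sup (Submodule.fg_span (finite_range _))
  have he : ((0 : V), (1 : ℝ)) ∉ L := by
    intro h
    obtain ⟨_, hy, _, hz, hkz⟩ := Submodule.mem_sup.1 h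
    obtain ⟨k, hk, rfl⟩ := PointedCone.mem_map.1 hy
    obtain ⟨μ, hμ, rfl⟩ := mem_hull_range_iff.1 hz
    simp only [Prod.ext_iff, Prod.fst_add, Prod.snd_add, Prod.fst_sum, Prod.snd_sum,
      Prod.smul_fst, Prod.smul_snd, LinearMap.inl_apply, smul_neg, Finset.sum_neg_distrib,
      smul_eq_mul, zero_add, add_neg_eq_zero] at hkz
    obtain ⟨rfl, hnorm⟩ := hkz
    have hzero : ∑ i, μ i • Y i = 0 :=
      hKY _ (mem_hull_range_iff.2 ⟨μ, hμ, rfl⟩) (by simpa [map_sum] using hk)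
    have hterms := eq_zero_of_sum_eq_zero_of_salient hY
      (fun i _ => smul_mem _ (hμ i) (subset_hull ⟨i, rfl⟩)) hzero
    have : ∑ i, μ i * ‖Y i‖ = 0 := Finset.sum_eq_zero fun i hi => by
      rw [← Real.norm_of_nonneg (hμ i), ← norm_smul, hterms i hi, norm_zero]
    linarith
  obtain ⟨g, hgL, hge⟩ := ProperCone.hyperplane_separation_point ⟨L, isClosed_of_fg hL⟩ he
  refine ⟨-(g.comp (ContinuousLinearMap.inl ℝ V ℝ)), fun x hx => ?_, fun i hi => ?_⟩
  · simpa using hgL (x, 0) (Submodule.mem_sup_left (Submodule.mem_map_of_mem hx))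
  · have hgi : 0 ≤ g (-T (Y i), ‖Y i‖) := hgL _ (Submodule.mem_sup_right (subset_hull ⟨i, rfl⟩))
    have hsplit : ((-T (Y i), ‖Y i‖) : V × ℝ) = -(T (Y i), 0) + ‖Y i‖ • (0, 1) := by
      ext <;> simp
    rw [hsplit, map_add, map_neg, map_smul, smul_eq_mul] at hgi
    have := mul_neg_of_pos_of_neg (norm_pos_iff.2 hi) hge
    simp only [_root_.neg_apply, ContinuousLinearMap.comp_apply, ContinuousLinearMap.inl_apply]
    linarith

end Separation

theorem singleton_add_diff_inter_image_eq_empty_iff {α G : Type*} [AddCommGroup G] {p : G}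
    {C : Set G} {f : α → G} {X : Set α} :
    ({p} + (C \ {0})) ∩ f '' X = ∅ ↔ ∀ x ∈ X, f x - p ∈ C → f x = p := by
  simp only [eq_empty_iff_forall_notMem, singleton_add, mem_inter_iff, mem_image, not_and,
    forall_exists_index, and_imp, mem_sdiff, mem_singleton_iff]
  constructor
  · intro h x hx hC
    by_contra hne
    exact h _ _ hC (sub_ne_zero.2 hne) (add_sub_cancel p (f x)) ⟨x, hx, rfl⟩
  · rintro h _ c hc hc0 rfl ⟨x, hx, hfx⟩
    exact hc0 (by simpa [hfx] using h x hx (by simpa [hfx] using hc))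

section DualCone

variable {n ι : Type*} [Fintype n]

theorem pos_dotProduct_of_mem_interior_dual {C : Set (n → ℝ)} {w c : n → ℝ}
    (hw : w ∈ interior {z | ∀ y ∈ C, 0 ≤ z ⬝ᵥ y}) (hc : c ∈ C) (hc0 : c ≠ 0) : 0 < w ⬝ᵥ c := by
  have hlim : Filter.Tendsto (fun ε : ℝ => w - ε • c) (nhdsWithin 0 (Ioi 0)) (nhds w) :=
    tendsto_nhdsWithin_of_tendsto_nhds
      ((by fun_prop : Continuous fun ε : ℝ => w - ε • c).tendsto' 0 w (by simp))
  obtain ⟨ε, hεc, hε⟩ :=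
    ((hlim.eventually_mem (mem_interior_iff_mem_nhds.1 hw)).and self_mem_nhdsWithin).exists
  have h := hεc c hc
  rw [sub_dotProduct, smul_dotProduct, smul_eq_mul] at h
  have hcc : 0 < c ⬝ᵥ c := by simpa using dotProduct_self_star_pos_iff.2 hc0
  nlinarith [mul_pos (mem_Ioi.1 hε) hcc]

theorem mem_interior_dual_hull_of_forall_pos [Fintype ι] {Y : ι → n → ℝ} {w : n → ℝ}
    (hw : ∀ i, Y i ≠ 0 → 0 < w ⬝ᵥ Y i) :
    w ∈ interior {z | ∀ y ∈ hull ℝ (range Y), 0 ≤ z ⬝ᵥ y} := by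
  have hsub : {z : n → ℝ | ∀ i, Y i ≠ 0 → 0 < z ⬝ᵥ Y i} ⊆
      {z | ∀ y ∈ hull ℝ (range Y), 0 ≤ z ⬝ᵥ y} := by
    intro z hz y hy
    obtain ⟨μ, hμ, rfl⟩ := mem_hull_range_iff.1 hy
    rw [dotProduct_sum]
    refine Finset.sum_nonneg fun i _ => ?_
    rw [dotProduct_smul, smul_eq_mul]
    rcases eq_or_ne (Y i) 0 with h | h
    · simp [h]
    · exact mul_nonneg (hμ i) (hz i h).le
  have hopen : IsOpen {z : n → ℝ | ∀ i, Y i ≠ 0 → 0 < z ⬝ᵥ Y i} := by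
    simp only [ofPred_forall]
    refine isOpen_iInter_of_finite fun i => ?_
    rcases eq_or_ne (Y i) 0 with h | h
    · simp [h]
    · simpa [h] using isOpen_lt continuous_const (continuous_id.dotProduct continuous_const)
  exact interior_maximal hsub hopen hw

end DualCone

theorem PointedCone.fg_positive_pi {ι : Type*} [Fintype ι] [DecidableEq ι] :
    (positive ℝ (ι → ℝ)).FG := by
  have hpos : positive ℝ (ι → ℝ) = hull ℝ (range fun i j => if i = j then 1 else 0) := by
    ext x
    rw [mem_positive, mem_hull_range_iff]
    constructor
    · intro hx
      exact ⟨x, hx, (pi_eq_sum_univ x).symm⟩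
    · rintro ⟨μ, hμ, rfl⟩ i
      simpa using hμ i
  rw [hpos]
  exact Submodule.fg_span (finite_range _)

section Homogenization

variable {n m q : Type*} [Fintype n]
  (P : Matrix n q ℝ) (A : Matrix m n ℝ) (b : m → ℝ) (xbar : n → ℝ)

/-- The cone `{(Pᵀ x - t • Pᵀ xbar, A x + s - t • b) | x, s ≥ 0, t ≥ 0}`. -/
def homogenizedCone : PointedCone ℝ ((q → ℝ) × (m → ℝ)) :=
  (positive ℝ (n → ℝ)).map (Pᵀ.mulVecLin.prod A.mulVecLin) ⊔
    (positive ℝ (m → ℝ)).map (LinearMap.inr ℝ (q → ℝ) (m → ℝ)) ⊔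
    hull ℝ {(-(Pᵀ *ᵥ xbar), -b)}

theorem fg_homogenizedCone [Fintype m] : (homogenizedCone P A b xbar).FG := by
  classical
  exact ((fg_positive_pi.map _).sup (fg_positive_pi.map _)).sup
    (Submodule.fg_span (finite_singleton _))

variable {P A b xbar}

theorem sub_mem_homogenizedCone {x : n → ℝ} (hx : A *ᵥ x ≤ b ∧ 0 ≤ x) :
    (Pᵀ *ᵥ x - Pᵀ *ᵥ xbar, 0) ∈ homogenizedCone P A b xbar := by
  have hsum : ((Pᵀ *ᵥ x - Pᵀ *ᵥ xbar, 0) : (q → ℝ) × (m → ℝ)) =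
      (Pᵀ *ᵥ x, A *ᵥ x) + (0, b - A *ᵥ x) + (-(Pᵀ *ᵥ xbar), -b) := by
    ext <;> simp [sub_eq_add_neg]
  rw [hsum]
  exact Submodule.add_mem_sup (Submodule.add_mem_sup (mem_map.2 ⟨x, hx.2, rfl⟩)
    (mem_map.2 ⟨b - A *ᵥ x, sub_nonneg.2 hx.1, rfl⟩)) (subset_hull rfl)

theorem eq_zero_of_mem_homogenizedCone {C : PointedCone ℝ (q → ℝ)}
    (hmax : ∀ x ∈ {x | A *ᵥ x ≤ b ∧ 0 ≤ x}, Pᵀ *ᵥ x - Pᵀ *ᵥ xbar ∈ C → Pᵀ *ᵥ x = Pᵀ *ᵥ xbar)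
    (hxbar : A *ᵥ xbar ≤ b ∧ 0 ≤ xbar) {c : q → ℝ} (hc : c ∈ C)
    (hcK : (c, 0) ∈ homogenizedCone P A b xbar) : c = 0 := by
  obtain ⟨_, hy, _, hz, hyz⟩ := Submodule.mem_sup.1 hcK
  obtain ⟨_, hy₁, _, hy₂, rfl⟩ := Submodule.mem_sup.1 hy
  obtain ⟨x, hx, rfl⟩ := mem_map.1 hy₁
  obtain ⟨s, hs, rfl⟩ := mem_map.1 hy₂
  obtain ⟨⟨t, ht⟩, rfl⟩ := Submodule.mem_span_singleton.1 hz
  simp only [Prod.ext_iff, Prod.fst_add, Prod.snd_add, LinearMap.prod_apply, Function.prod_apply,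
    Matrix.mulVecLin_apply, LinearMap.inr_apply, Nonneg.mk_smul, Prod.smul_mk, smul_neg,
    add_zero] at hyz
  obtain ⟨hPx, hAx⟩ := hyz
  have ht₁ : 0 < 1 + t := by positivity
  -- `x'` is feasible and improves on `xbar` by `(1 + t)⁻¹ • c`, whether or not `t = 0`
  set x' := (1 + t)⁻¹ • (x + xbar)
  have hAx' : A *ᵥ x' ≤ b := calc
    A *ᵥ x' = (1 + t)⁻¹ • (t • b - s + A *ᵥ xbar) := by
      rw [mulVec_smul, mulVec_add, eq_sub_of_add_eq (add_neg_eq_zero.1 hAx)]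
    _ ≤ (1 + t)⁻¹ • ((1 + t) • b) := by
      refine smul_le_smul_of_nonneg_left ?_ (inv_nonneg.2 ht₁.le)
      rw [add_smul, one_smul, add_comm b]
      exact add_le_add (sub_le_self _ hs) hxbar.1
    _ = b := inv_smul_smul₀ ht₁.ne' b
  have hx' : 0 ≤ x' := smul_nonneg (inv_nonneg.2 ht₁.le) (add_nonneg hx hxbar.2)
  have hPx' : Pᵀ *ᵥ x' - Pᵀ *ᵥ xbar = (1 + t)⁻¹ • c := by
    have h : (1 + t)⁻¹ * (1 + t) = 1 := inv_mul_cancel₀ ht₁.ne'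
    rw [mulVec_smul, mulVec_add]
    linear_combination (norm := module) (1 + t)⁻¹ • hPx + h • Pᵀ *ᵥ xbar
  have := hmax x' ⟨hAx', hx'⟩ (hPx' ▸ C.smul_mem (inv_nonneg.2 ht₁.le) hc)
  rw [← sub_eq_zero, hPx', smul_eq_zero] at this
  exact this.resolve_left (inv_ne_zero ht₁.ne')

end Homogenization

theorem maximizer_iff_optimal_for_interior_weight_general
    (n m q : ℕ)
    (P : Matrix (Fin n) (Fin q) ℝ) (A : Matrix (Fin m) (Fin n) ℝ) (b : Fin m → ℝ)
    (C : Set (Fin q → ℝ))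
    (hCpoly : ∃ (k : ℕ) (Y : Fin k → Fin q → ℝ),
      C = {v | ∃ μ : Fin k → ℝ, (∀ i, 0 ≤ μ i) ∧ v = ∑ i, μ i • Y i})
    (hCpointed : ∀ v ∈ C, -v ∈ C → v = 0)
    (X : Set (Fin n → ℝ)) (hX : X = {x | A.mulVec x ≤ b ∧ 0 ≤ x})
    (xbar : Fin n → ℝ) (hxbar : xbar ∈ X) :
    (({P.transpose.mulVec xbar} + (C \ {0})) ∩ (P.transpose.mulVec '' X) = ∅)
      ↔ ∃ w ∈ interior {z : Fin q → ℝ | ∀ y ∈ C, 0 ≤ z ⬝ᵥ y},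
          ∀ x ∈ X, w ⬝ᵥ P.transpose.mulVec x ≤ w ⬝ᵥ P.transpose.mulVec xbar := by
  rw [singleton_add_diff_inter_image_eq_empty_iff]
  constructor
  · intro hmax
    obtain ⟨k, Y, hC⟩ := hCpoly
    have hCY : C = hull ℝ (range Y) := by
      ext
      simp [hC, mem_hull_range_iff, eq_comm]
    subst hCY hX
    obtain ⟨f, hfK, hfY⟩ := exists_separating_strongDual_of_salient (fg_homogenizedCone P A b xbar)
      (LinearMap.inl ℝ _ _) Y (fun y hy hy0 hneg => hy0 (hCpointed y hy hneg))
      (fun c hc hcK => eq_zero_of_mem_homogenizedCone hmax hxbar hc hcK)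
    set g : Module.Dual ℝ (Fin q → ℝ) := f.toLinearMap ∘ₗ LinearMap.inl ℝ _ _
    obtain ⟨w, hw⟩ : ∃ w : Fin q → ℝ, ∀ y, f (y, 0) = w ⬝ᵥ y :=
      ⟨(dotProductEquiv ℝ _).symm g,
        fun y => (LinearMap.congr_fun ((dotProductEquiv ℝ _).apply_symm_apply g) y).symm⟩
    refine ⟨w, mem_interior_dual_hull_of_forall_pos fun i hi => hw (Y i) ▸ hfY i hi,
      fun x hx => ?_⟩
    have := hfK _ (sub_mem_homogenizedCone hx)
    rw [hw, dotProduct_sub] at this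
    linarith
  · rintro ⟨w, hw, hopt⟩ x hx hxC
    by_contra hne
    have := pos_dotProduct_of_mem_interior_dual hw hxC (sub_ne_zero.2 hne)
    rw [dotProduct_sub] at this
    linarith [hopt x hx]

/-- Proposition 2.5 (maximizer case): x̄ ∈ X is a maximizer of (P) iff it is an
optimal solution of the weighted sum scalarized problem (P1(w)) for some
w in the interior of the dual cone C⁺. -/
theorem maximizer_iff_optimal_for_interior_weight
    (n m q : ℕ) (hn : 0 < n) (hm : 0 < m) (hq : 0 < q)
    (P : Matrix (Fin n) (Fin q) ℝ) (A : Matrix (Fin m) (Fin n) ℝ) (b : Fin m → ℝ)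
    (C : Set (Fin q → ℝ))
    (hC0 : {(0 : Fin q → ℝ)} ⊂ C) (hCuniv : C ≠ Set.univ)
    (hCpoly : ∃ (k : ℕ) (Y : Fin k → Fin q → ℝ),
      C = {v | ∃ μ : Fin k → ℝ, (∀ i, 0 ≤ μ i) ∧ v = ∑ i, μ i • Y i})
    (hCpointed : ∀ v ∈ C, -v ∈ C → v = 0)
    (hCsolid : (interior C).Nonempty)
    (X : Set (Fin n → ℝ)) (hX : X = {x | A.mulVec x ≤ b ∧ 0 ≤ x})
    (xbar : Fin n → ℝ) (hxbar : xbar ∈ X) :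
    (({P.transpose.mulVec xbar} + (C \ {0})) ∩ (P.transpose.mulVec '' X) = ∅)
      ↔ ∃ w ∈ interior {z : Fin q → ℝ | ∀ y ∈ C, 0 ≤ z ⬝ᵥ y},
          ∀ x ∈ X, w ⬝ᵥ P.transpose.mulVec x ≤ w ⬝ᵥ P.transpose.mulVec xbar :=
  maximizer_iff_optimal_for_interior_weight_general n m q P A b C hCpoly hCpointed X hX xbar hxbar
end

section
/- A point x̄ ∈ X is a weak maximizer of (P) if and only if there exists w ∈ C⁺ \ {0} such that x̄ is an optimal solution of the weighted sum scalarized problem (P1(w)), i.e., wᵀPᵀx̄ ≥ wᵀPᵀx for all x ∈ X. -/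
open Matrix Pointwise

/-- Proposition 2.5 (weak maximizer case): x̄ ∈ X is a weak maximizer of (P) iff it is
an optimal solution of the weighted sum scalarized problem (P1(w)) for some
w ∈ C⁺ \ {0}. -/
theorem weakMaximizer_iff_optimal_for_nonzero_weight
    (n m q : ℕ) (hn : 0 < n) (hm : 0 < m) (hq : 0 < q)
    (P : Matrix (Fin n) (Fin q) ℝ) (A : Matrix (Fin m) (Fin n) ℝ) (b : Fin m → ℝ)
    (C : Set (Fin q → ℝ))
    (hC0 : {(0 : Fin q → ℝ)} ⊂ C) (hCuniv : C ≠ Set.univ)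
    (hCpoly : ∃ (k : ℕ) (Y : Fin k → Fin q → ℝ),
      C = {v | ∃ μ : Fin k → ℝ, (∀ i, 0 ≤ μ i) ∧ v = ∑ i, μ i • Y i})
    (hCpointed : ∀ v ∈ C, -v ∈ C → v = 0)
    (hCsolid : (interior C).Nonempty)
    (X : Set (Fin n → ℝ)) (hX : X = {x | A.mulVec x ≤ b ∧ 0 ≤ x})
    (xbar : Fin n → ℝ) (hxbar : xbar ∈ X) :
    (({P.transpose.mulVec xbar} + interior C) ∩ (P.transpose.mulVec '' X) = ∅)
      ↔ ∃ w ∈ {z : Fin q → ℝ | ∀ y ∈ C, 0 ≤ z ⬝ᵥ y} \ {0},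
          ∀ x ∈ X, w ⬝ᵥ P.transpose.mulVec x ≤ w ⬝ᵥ P.transpose.mulVec xbar := by
  obtain ⟨k, Y, hCY⟩ := hCpoly
  -- basic cone facts
  have hadd : ∀ v ∈ C, ∀ u ∈ C, v + u ∈ C := by
    intro v hv u hu
    rw [hCY] at hv hu ⊢
    obtain ⟨μ, hμ, rfl⟩ := hv
    obtain ⟨ν, hν, rfl⟩ := hu
    exact ⟨μ + ν, fun i => add_nonneg (hμ i) (hν i), by
      simp [add_smul, Finset.sum_add_distrib]⟩
  have hsmul : ∀ (t : ℝ), 0 ≤ t → ∀ v ∈ C, t • v ∈ C := by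
    intro t ht v hv
    rw [hCY] at hv ⊢
    obtain ⟨μ, hμ, rfl⟩ := hv
    exact ⟨t • μ, fun i => mul_nonneg ht (hμ i), by
      simp [Finset.smul_sum, smul_smul]⟩
  have hCconv : Convex ℝ C := by
    intro v hv u hu a c ha hc _
    exact hadd _ (hsmul a ha v hv) _ (hsmul c hc u hu)
  -- scaling preserves the interior
  have hint_smul : ∀ (t : ℝ), 0 < t → ∀ v ∈ interior C, t • v ∈ interior C := by
    intro t ht v hv
    have hopen : IsOpen ((t • ·) '' interior C) :=
      isOpenMap_smul₀ (ne_of_gt ht) _ isOpen_interior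
    have hsub : ((t • ·) '' interior C) ⊆ C := by
      rintro _ ⟨y, hy, rfl⟩
      exact hsmul t ht.le y (interior_subset hy)
    exact interior_maximal hsub hopen ⟨v, hv, rfl⟩
  -- translation by a cone element preserves the interior
  have hint_add : ∀ v ∈ C, ∀ u ∈ interior C, v + u ∈ interior C := by
    intro v hv u hu
    have hopen : IsOpen ((v + ·) '' interior C) :=
      isOpenMap_add_left v _ isOpen_interior
    have hsub : ((v + ·) '' interior C) ⊆ C := by
      rintro _ ⟨y, hy, rfl⟩
      exact hadd v hv y (interior_subset hy)
    exact interior_maximal hsub hopen ⟨u, hu, rfl⟩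
  have hXconv : Convex ℝ X := by
    rw [hX]
    intro v hv u hu a c ha hc hac
    refine ⟨?_, ?_⟩
    · have h3 : A.mulVec (a • v + c • u) = a • A.mulVec v + c • A.mulVec u := by
        simp [Matrix.mulVec_add, Matrix.mulVec_smul]
      rw [h3]
      calc a • A.mulVec v + c • A.mulVec u ≤ a • b + c • b :=
            add_le_add (smul_le_smul_of_nonneg_left hv.1 ha)
              (smul_le_smul_of_nonneg_left hu.1 hc)
        _ = b := by rw [← add_smul, hac, one_smul]
    · have h1 : (0:Fin n → ℝ) ≤ a • v := smul_nonneg ha hv.2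
      have h2 : (0:Fin n → ℝ) ≤ c • u := smul_nonneg hc hu.2
      calc (0:Fin n → ℝ) = 0 + 0 := by simp
        _ ≤ a • v + c • u := add_le_add h1 h2
  constructor
  · -- weak maximizer → existence of weight
    intro hmax
    set T : (Fin n → ℝ) →ₗ[ℝ] (Fin q → ℝ) := P.transpose.mulVecLin with hT
    set S : Set (Fin q → ℝ) :=
      ((- P.transpose.mulVec xbar) + ·) '' (T '' X) with hS
    have hSconv : Convex ℝ S := ((hXconv.linear_image T).translate _)
    have hdisj : Disjoint (interior C) S := by
      rw [Set.disjoint_left]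
      rintro c hc ⟨_, ⟨x, hx, rfl⟩, hceq⟩
      have hmem : P.transpose.mulVec x ∈
          ({P.transpose.mulVec xbar} + interior C) ∩ (P.transpose.mulVec '' X) := by
      -- hceq : -(Pᵀ *ᵥ xbar) + T x = c
        constructor
        · refine ⟨P.transpose.mulVec xbar, rfl, c, hc, ?_⟩
          rw [← hceq, hT, Matrix.mulVecLin_apply]
          module
        · exact ⟨x, hx, rfl⟩
      rw [hmax] at hmem
      exact hmem
    obtain ⟨f, u, hfs, hft⟩ :=
      geometric_hahn_banach_open (hCconv.interior) isOpen_interior hSconv hdisj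
    obtain ⟨c₀, hc₀⟩ := hCsolid
    -- 0 ∈ S
    have h0S : (0 : Fin q → ℝ) ∈ S := by
      refine ⟨T xbar, ⟨xbar, hxbar, rfl⟩, ?_⟩
      rw [hT, Matrix.mulVecLin_apply]
      abel
    have hu0 : u ≤ 0 := by simpa using hft 0 h0S
    -- f is negative on interior C
    have hfint : ∀ c ∈ interior C, f c < 0 := fun c hc => lt_of_lt_of_le (hfs c hc) hu0
    have hfc₀ : f c₀ < 0 := hfint c₀ hc₀
    -- u ≥ 0
    have hu0' : 0 ≤ u := by
      by_contra hlt
      push_neg at hlt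
      have ht : (0:ℝ) < u / (2 * f c₀) := div_pos_of_neg_of_neg hlt (by linarith)
      have hlt2 := hfs _ (hint_smul _ ht c₀ hc₀)
      rw [_root_.map_smul, smul_eq_mul] at hlt2
      have hne : f c₀ ≠ 0 := ne_of_lt hfc₀
      have heq2 : u / (2 * f c₀) * f c₀ = u / 2 := by
        field_simp
      rw [heq2] at hlt2
      linarith
    -- f nonpositive on C
    have hfC : ∀ c ∈ C, f c ≤ 0 := by
      intro c hc
      by_contra hpos
      push_neg at hpos
      have ht : (0:ℝ) < f c / (2 * (-(f c₀))) := div_pos hpos (by linarith)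
      have hlt2 := hfint _ (hint_add c hc _ (hint_smul _ ht c₀ hc₀))
      rw [map_add, _root_.map_smul, smul_eq_mul] at hlt2
      have hne : f c₀ ≠ 0 := ne_of_lt hfc₀
      have hx : f c / (2 * (-f c₀)) * f c₀ = - (f c / 2) := by
        field_simp
      rw [hx] at hlt2
      linarith
    -- the representing weight
    have hrepr : ∀ y : Fin q → ℝ,
        (fun i => -(f (Pi.single i 1))) ⬝ᵥ y = -(f y) := by
      intro y
      have h1 : f y = ∑ i, y i * f (Pi.single i 1) := by
        conv_lhs => rw [pi_eq_sum_univ y, map_sum]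
        refine Finset.sum_congr rfl fun i _ => ?_
        rw [_root_.map_smul, smul_eq_mul]
        congr 2
        ext j
        simp [Pi.single_apply, eq_comm]
      rw [h1, dotProduct, ← Finset.sum_neg_distrib]
      exact Finset.sum_congr rfl fun i _ => by ring
    refine ⟨fun i => -(f (Pi.single i 1)), ⟨?_, ?_⟩, ?_⟩
    · intro y hy
      rw [hrepr y]
      linarith [hfC y hy]
    · intro h0
      have : (fun i => -(f (Pi.single i 1))) ⬝ᵥ c₀ = 0 := by
        rw [Set.mem_singleton_iff] at h0
        rw [h0]
        simp
      rw [hrepr c₀] at this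
      linarith
    · intro x hx
      have hmem : (-(P.transpose.mulVec xbar) + T x) ∈ S := ⟨T x, ⟨x, hx, rfl⟩, rfl⟩
      have := le_trans hu0' (hft _ hmem)
      rw [map_add, map_neg] at this
      rw [hrepr, hrepr]
      have hTx : f (T x) = f (P.transpose.mulVec x) := by
        rw [hT, Matrix.mulVecLin_apply]
      rw [hTx] at this
      linarith
  · -- existence of weight → weak maximizer
    rintro ⟨w, ⟨hwC, hw0⟩, hopt⟩
    rw [Set.eq_empty_iff_forall_notMem]
    rintro z ⟨⟨a, ha, c, hc, hsum⟩, x, hx, heq⟩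
    rw [Set.mem_singleton_iff] at ha
    subst ha
    -- w ⬝ c > 0
    have hw0' : w ≠ 0 := by simpa using hw0
    have hww : 0 < w ⬝ᵥ w := by
      have hnn : 0 ≤ w ⬝ᵥ w := Finset.sum_nonneg fun i _ => mul_self_nonneg _
      rcases lt_or_eq_of_le hnn with h | h
      · exact h
      · exact absurd (dotProduct_self_eq_zero.mp h.symm) hw0'
    have hwnorm : 0 < ‖w‖ := by rwa [norm_pos_iff]
    obtain ⟨ε, hε, hball⟩ := Metric.mem_nhds_iff.mp (mem_interior_iff_mem_nhds.mp hc)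
    set δ : ℝ := ε / (2 * ‖w‖) with hδ
    have hδpos : 0 < δ := div_pos hε (by positivity)
    have hmem : c - δ • w ∈ C := by
      apply hball
      rw [Metric.mem_ball, dist_eq_norm]
      have h4 : c - δ • w - c = -(δ • w) := by abel
      rw [h4, norm_neg, norm_smul, Real.norm_eq_abs, abs_of_pos hδpos]
      have h5 : δ * ‖w‖ = ε / 2 := by
        rw [hδ]
        field_simp
      rw [h5]
      linarith
    have h1 : 0 ≤ w ⬝ᵥ (c - δ • w) := hwC _ hmem
    have h2 : w ⬝ᵥ (c - δ • w) = w ⬝ᵥ c - δ * (w ⬝ᵥ w) := by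
      rw [dotProduct_sub]
      congr 1
      rw [dotProduct_smul, smul_eq_mul]
    have hwc : 0 < w ⬝ᵥ c := by
      have h6 := mul_pos hδpos hww
      rw [h2] at h1
      linarith
    have h7 := hopt x hx
    rw [heq, ← hsum, dotProduct_add] at h7
    linarith
end

section
/- Assume X ≠ ∅. Then {w ∈ ℝ^q : wᵀv ≤ 0 for every v ∈ Pᵀ[X^h] − C} = {w ∈ C⁺ : the scalarized objective wᵀPᵀx is bounded above on X}, where Pᵀ[X^h] − C = {Pᵀx − c : x ∈ X^h, c ∈ C}. (Since Pᵀ[X^h] − C is the recession cone of the lower image Pᵀ[X] − C, this says that the negative dual cone of the recession cone of the lower image consists exactly of those w ∈ C⁺ for which (P1(w)) is bounded.) -/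
/-!
Testing `w` against the recession directions `Pᵀx - c` splits into `w ∈ C⁺` (take `x = 0`) and
`(w ᵥ* Pᵀ) ⬝ᵥ x ≤ 0` on `Xʰ` (take `c = 0`). So the theorem is the linear-programming fact that,
on a nonempty polyhedron `X`, a linear objective is bounded above iff it is nonpositive on the
recession cone `Xʰ`. One direction is the ray `x₀ + t • x ⊆ X`. The other is Farkas' lemma for the
stacked matrix `[A; -1]`: either `c = μ₁ ᵥ* A - μ₂` with `μ ≥ 0`, which bounds `c ⬝ᵥ x` by
`μ₁ ⬝ᵥ b` on `X`, or there is a recession direction with positive objective. Farkas' lemma itself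
is proved by Fourier–Motzkin elimination of one generator at a time.
-/

open Matrix

namespace Module.Dual

variable {𝕜 E : Type*} [Field 𝕜] [AddCommGroup E] [Module 𝕜 E]

/-- The projection onto `ker d` along `u` (when `d u ≠ 0`). -/
def projAlong (d : Module.Dual 𝕜 E) (u : E) : E →ₗ[𝕜] E :=
  LinearMap.id - (d u)⁻¹ • d.smulRight u

variable {d : Module.Dual 𝕜 E} {u : E}

theorem projAlong_apply (x : E) : d.projAlong u x = x - ((d u)⁻¹ * d x) • u := by
  simp [projAlong, mul_smul]

theorem projAlong_self (hu : d u ≠ 0) : d.projAlong u u = 0 := by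
  simp [projAlong_apply, hu]

theorem eq_smul_of_projAlong_eq_zero {x : E} (hx : d.projAlong u x = 0) :
    x = ((d u)⁻¹ * d x) • u :=
  sub_eq_zero.mp ((projAlong_apply x).symm.trans hx)

end Module.Dual

section Farkas

variable {𝕜 E : Type*} [Field 𝕜] [LinearOrder 𝕜] [IsStrictOrderedRing 𝕜]
  [AddCommGroup E] [Module 𝕜 E]

theorem Module.exists_dual_apply_neg {c : E} (hc : c ≠ 0) :
    ∃ f : Module.Dual 𝕜 E, f c < 0 := by
  obtain ⟨g, hg⟩ : ∃ g : Module.Dual 𝕜 E, g c ≠ 0 := by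
    by_contra! h
    exact hc ((Module.forall_dual_apply_eq_zero_iff 𝕜 c).mp h)
  exact ⟨-(g c)⁻¹ • g, by simp [hg]⟩

theorem not_conic_combination_projAlong {k : ℕ} {d : Module.Dual 𝕜 E} {u c : E}
    {w : Fin k → E} (hdu : d u < 0) (hdw : ∀ i, 0 ≤ d (w i)) (hdc : d c ≤ 0)
    (hc : ¬ ∃ μ : Fin (k + 1) → 𝕜, 0 ≤ μ ∧ ∑ i, μ i • Fin.cons u w i = c) :
    ¬ ∃ μ : Fin k → 𝕜, 0 ≤ μ ∧ ∑ i, μ i • d.projAlong u (w i) = d.projAlong u c := by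
  rintro ⟨μ, hμ, hsum⟩
  set z := c - ∑ i, μ i • w i with hz
  have hπz : d.projAlong u z = 0 := by simp [z, map_sub, map_sum, hsum]
  have hdz : d z ≤ 0 := by
    have hdμw : 0 ≤ ∑ i, μ i * d (w i) :=
      Finset.sum_nonneg fun i _ => mul_nonneg (hμ i) (hdw i)
    simp only [z, map_sub, map_sum, map_smul, smul_eq_mul]
    linarith
  have hγ : 0 ≤ (d u)⁻¹ * d z := mul_nonneg_of_nonpos_of_nonpos (inv_nonpos.mpr hdu.le) hdz
  refine hc ⟨Fin.cons ((d u)⁻¹ * d z) μ, Fin.le_cons.mpr ⟨hγ, hμ⟩, ?_⟩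
  rw [Fin.sum_univ_succ]
  simp only [Fin.cons_zero, Fin.cons_succ]
  rw [← Module.Dual.eq_smul_of_projAlong_eq_zero hπz, hz, sub_add_cancel]

theorem exists_dual_separates_of_not_conic_combination :
    ∀ {k : ℕ} (v : Fin k → E) {c : E}, (¬ ∃ μ : Fin k → 𝕜, 0 ≤ μ ∧ ∑ i, μ i • v i = c) →
      ∃ f : Module.Dual 𝕜 E, (∀ i, 0 ≤ f (v i)) ∧ f c < 0
  | 0, _, c, hc => by
    obtain ⟨f, hf⟩ := Module.exists_dual_apply_neg (𝕜 := 𝕜) (c := c)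
      fun h => hc ⟨0, le_rfl, by simp [h]⟩
    exact ⟨f, finZeroElim, hf⟩
  | k + 1, v, c, hc => by
    induction v using Fin.consCases with | cons u w => ?_
    have hcw : ¬ ∃ μ : Fin k → 𝕜, 0 ≤ μ ∧ ∑ i, μ i • w i = c := by
      rintro ⟨μ, hμ, hsum⟩
      exact hc ⟨Fin.cons 0 μ, Fin.le_cons.mpr ⟨le_rfl, hμ⟩, by simp [Fin.sum_univ_succ, hsum]⟩
    obtain ⟨d, hdw, hdc⟩ := exists_dual_separates_of_not_conic_combination w hcw
    obtain hdu | hdu := le_or_gt 0 (d u)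
    · exact ⟨d, Fin.cases hdu hdw, hdc⟩
    obtain ⟨f, hfw, hfc⟩ := exists_dual_separates_of_not_conic_combination _
      (not_conic_combination_projAlong hdu hdw hdc.le hc)
    refine ⟨f ∘ₗ d.projAlong u, Fin.cases ?_ hfw, hfc⟩
    simp [Module.Dual.projAlong_self hdu.ne]

theorem nonpos_of_forall_add_mul_le {a b M : 𝕜} (h : ∀ t, 0 ≤ t → a + t * b ≤ M) : b ≤ 0 := by
  by_contra! hb
  have hM : a ≤ M := by simpa using h 0 le_rfl
  have hbig := h ((M - a + 1) / b) (div_nonneg (by linarith) hb.le)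
  rw [div_mul_cancel₀ _ hb.ne'] at hbig
  linarith

end Farkas

namespace Matrix

variable {𝕜 ι κ : Type*} [Field 𝕜] [LinearOrder 𝕜] [IsStrictOrderedRing 𝕜]
  [Fintype ι] [Fintype κ]

theorem exists_mulVec_nonneg_dotProduct_neg_of_not_vecMul (B : Matrix ι κ 𝕜) {c : κ → 𝕜}
    (hc : ¬ ∃ μ : ι → 𝕜, 0 ≤ μ ∧ μ ᵥ* B = c) :
    ∃ y : κ → 𝕜, 0 ≤ B *ᵥ y ∧ c ⬝ᵥ y < 0 := by
  classical
  let e := Fintype.equivFin ι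
  have hcB : ¬ ∃ μ : Fin _ → 𝕜, 0 ≤ μ ∧ ∑ i, μ i • B (e.symm i) = c := by
    rintro ⟨μ, hμ, hsum⟩
    refine hc ⟨μ ∘ e, fun i => hμ (e i), ?_⟩
    rw [vecMul_eq_sum, ← hsum, ← e.sum_comp]
    simp
  obtain ⟨f, hfB, hfc⟩ := exists_dual_separates_of_not_conic_combination _ hcB
  set y := (dotProductEquiv 𝕜 κ).symm f
  have hf : ∀ x, f x = y ⬝ᵥ x := fun x => by
    rw [← (dotProductEquiv 𝕜 κ).apply_symm_apply f, dotProductEquiv_apply_apply]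
  refine ⟨y, fun i => ?_, ?_⟩
  · simpa [hf, mulVec, dotProduct_comm] using hfB (e i)
  · rwa [hf, dotProduct_comm] at hfc

theorem exists_dotProduct_le_of_nonpos_on_recession (A : Matrix ι κ 𝕜) (b : ι → 𝕜)
    {c : κ → 𝕜} (hc : ∀ x, A *ᵥ x ≤ 0 → 0 ≤ x → c ⬝ᵥ x ≤ 0) :
    ∃ M, ∀ x, A *ᵥ x ≤ b → 0 ≤ x → c ⬝ᵥ x ≤ M := by
  classical
  by_cases hcA : ∃ μ : ι ⊕ κ → 𝕜, 0 ≤ μ ∧ μ ᵥ* fromRows A (-1) = c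
  · obtain ⟨μ, hμ, rfl⟩ := hcA
    refine ⟨μ ∘ Sum.inl ⬝ᵥ b, fun x hAx hx => ?_⟩
    have hA : μ ∘ Sum.inl ⬝ᵥ A *ᵥ x ≤ μ ∘ Sum.inl ⬝ᵥ b :=
      dotProduct_le_dotProduct_of_nonneg_left hAx fun i => hμ _
    have hx : 0 ≤ μ ∘ Sum.inr ⬝ᵥ x := dotProduct_nonneg_of_nonneg (fun j => hμ _) hx
    rw [vecMul_fromRows, add_dotProduct, ← dotProduct_mulVec, vecMul_neg, vecMul_one,
      neg_dotProduct]
    linarith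
  · obtain ⟨y, hy, hcy⟩ := exists_mulVec_nonneg_dotProduct_neg_of_not_vecMul _ hcA
    rw [fromRows_mulVec, Sum.nonneg_elim_iff, neg_mulVec, one_mulVec, neg_nonneg] at hy
    have hcy' := hc (-y) (by rw [mulVec_neg, neg_nonpos]; exact hy.1) (neg_nonneg.mpr hy.2)
    rw [dotProduct_neg] at hcy'
    linarith

omit [Fintype ι] in
theorem dotProduct_nonpos_on_recession_of_le {A : Matrix ι κ 𝕜} {b : ι → 𝕜} {c : κ → 𝕜}
    {M : 𝕜} (hM : ∀ x, A *ᵥ x ≤ b → 0 ≤ x → c ⬝ᵥ x ≤ M) {x₀ : κ → 𝕜}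
    (hAx₀ : A *ᵥ x₀ ≤ b) (hx₀ : 0 ≤ x₀) {x : κ → 𝕜} (hAx : A *ᵥ x ≤ 0) (hx : 0 ≤ x) :
    c ⬝ᵥ x ≤ 0 := by
  refine nonpos_of_forall_add_mul_le (a := c ⬝ᵥ x₀) (M := M) fun t ht => ?_
  have hray : A *ᵥ (x₀ + t • x) ≤ b := by
    rw [mulVec_add, mulVec_smul]
    exact add_le_of_le_of_nonpos hAx₀ (smul_nonpos_of_nonneg_of_nonpos ht hAx)
  simpa [dotProduct_add, dotProduct_smul] using
    hM _ hray (add_nonneg hx₀ (smul_nonneg ht hx))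

end Matrix

theorem neg_dual_recession_eq_bounded_weights_general
    (n m q : ℕ)
    (P : Matrix (Fin n) (Fin q) ℝ) (A : Matrix (Fin m) (Fin n) ℝ) (b : Fin m → ℝ)
    (C : Set (Fin q → ℝ))
    (hC0 : {(0 : Fin q → ℝ)} ⊂ C)
    (X : Set (Fin n → ℝ)) (hX : X = {x | A.mulVec x ≤ b ∧ 0 ≤ x})
    (Xh : Set (Fin n → ℝ)) (hXh : Xh = {x | A.mulVec x ≤ 0 ∧ 0 ≤ x})
    (hXne : X.Nonempty) :
    {w : Fin q → ℝ |
        ∀ v ∈ {v : Fin q → ℝ | ∃ x ∈ Xh, ∃ c ∈ C, v = P.transpose.mulVec x - c},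
          w ⬝ᵥ v ≤ 0}
      = {w : Fin q → ℝ | (∀ y ∈ C, 0 ≤ w ⬝ᵥ y) ∧
          ∃ M : ℝ, ∀ x ∈ X, w ⬝ᵥ P.transpose.mulVec x ≤ M} := by
  subst hX hXh
  have h0C : (0 : Fin q → ℝ) ∈ C := hC0.subset rfl
  obtain ⟨x₀, hAx₀, hx₀⟩ := hXne
  ext w
  simp only [Set.mem_ofPred_eq, dotProduct_mulVec w Pᵀ, forall_exists_index, and_imp]
  constructor
  · intro hw
    refine ⟨fun y hy => ?_, ?_⟩
    · simpa using hw _ 0 (by simp) le_rfl y hy rfl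
    · refine exists_dotProduct_le_of_nonpos_on_recession A b fun x hAx hx => ?_
      simpa [dotProduct_mulVec] using hw _ x hAx hx 0 h0C rfl
  · rintro ⟨hwC, M, hM⟩ _ x hAx hx y hy rfl
    have hwx := dotProduct_nonpos_on_recession_of_le hM hAx₀ hx₀ hAx hx
    rw [dotProduct_sub, dotProduct_mulVec]
    linarith [hwC y hy]

/-- Proposition 3.5: the negative dual cone of the recession cone Pᵀ[Xʰ] − C of the
lower image consists exactly of those w ∈ C⁺ for which the scalarized objective
is bounded above on X. -/
theorem neg_dual_recession_eq_bounded_weights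
    (n m q : ℕ) (hn : 0 < n) (hm : 0 < m) (hq : 0 < q)
    (P : Matrix (Fin n) (Fin q) ℝ) (A : Matrix (Fin m) (Fin n) ℝ) (b : Fin m → ℝ)
    (C : Set (Fin q → ℝ))
    (hC0 : {(0 : Fin q → ℝ)} ⊂ C) (hCuniv : C ≠ Set.univ)
    (hCpoly : ∃ (k : ℕ) (Y : Fin k → Fin q → ℝ),
      C = {v | ∃ μ : Fin k → ℝ, (∀ i, 0 ≤ μ i) ∧ v = ∑ i, μ i • Y i})
    (hCpointed : ∀ v ∈ C, -v ∈ C → v = 0)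
    (hCsolid : (interior C).Nonempty)
    (X : Set (Fin n → ℝ)) (hX : X = {x | A.mulVec x ≤ b ∧ 0 ≤ x})
    (Xh : Set (Fin n → ℝ)) (hXh : Xh = {x | A.mulVec x ≤ 0 ∧ 0 ≤ x})
    (hXne : X.Nonempty) :
    {w : Fin q → ℝ |
        ∀ v ∈ {v : Fin q → ℝ | ∃ x ∈ Xh, ∃ c ∈ C, v = P.transpose.mulVec x - c},
          w ⬝ᵥ v ≤ 0}
      = {w : Fin q → ℝ | (∀ y ∈ C, 0 ≤ w ⬝ᵥ y) ∧
          ∃ M : ℝ, ∀ x ∈ X, w ⬝ᵥ P.transpose.mulVec x ≤ M} :=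
  neg_dual_recession_eq_bounded_weights_general n m q P A b C hC0 X hX Xh hXh hXne
end

section
/- Suppose (P) has a solution, i.e., there exists a finite supremizer (X̄, X̄^h) all of whose elements are maximizers (every x̄ ∈ X̄ is a maximizer of (P) and every x^h ∈ X̄^h is a maximizer of the homogeneous problem). Then there exists w in the interior of C⁺ and x̄ ∈ X such that x̄ is an optimal solution of (P1(w)), i.e., wᵀPᵀx̄ ≥ wᵀPᵀx for all x ∈ X. -/
/-!
Let `V = Pᵀ[X̄ʰ]`. Maximality of the homogeneous directions forces `cone V ∩ C = {0}`: if
`Pᵀ y ∈ C \ {0}` with `y ∈ cone X̄ʰ`, then for any `xʰ ∈ X̄ʰ` the point `Pᵀ (xʰ + y)` dominates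
`Pᵀ xʰ`. Since `C` is pointed, the convex hull of its nonzero generators is a compact convex set
missing `cone V`, which is closed by the conic Carathéodory theorem. A separating functional `w` is
then positive on the nonzero generators of `C`, so it lies in the interior of `C⁺`, and
nonpositive on `V`. On `Pᵀ[X] - C = conv Pᵀ[X̄] + cone V - C` it is therefore bounded by its
maximum over the finite set `Pᵀ[X̄]`, attained at some `x̄ ∈ X̄`.
-/

open Matrix Pointwise

/-- The conic hull of a set: all finite nonnegative combinations of its elements
(with `coneHull ∅ = {0}`, via the empty combination). -/
def coneHull {E : Type*} [AddCommMonoid E] [Module ℝ E] (S : Set E) : Set E :=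
  {v | ∃ (k : ℕ) (μ : Fin k → ℝ) (f : Fin k → E),
    (∀ i, 0 ≤ μ i) ∧ (∀ i, f i ∈ S) ∧ v = ∑ i, μ i • f i}

open Set

namespace PointedCone

variable {E : Type*} [AddCommGroup E] [Module ℝ E]

lemma mem_hull_finset_iff {s : Finset E} {x : E} :
    x ∈ hull ℝ (s : Set E) ↔ ∃ μ : E → ℝ, (∀ a ∈ s, 0 ≤ μ a) ∧ ∑ a ∈ s, μ a • a = x := by
  constructor
  · rw [Submodule.mem_span_finset]
    rintro ⟨f, -, rfl⟩
    exact ⟨fun a => f a, fun a _ => (f a).2, rfl⟩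
  · rintro ⟨μ, hμ, rfl⟩
    exact Submodule.sum_mem _ fun a ha => (hull ℝ _).smul_mem (hμ a ha) (subset_hull ha)

lemma mem_hull_range_iff_s11 {ι : Type*} [Fintype ι] {v : ι → E} {x : E} :
    x ∈ hull ℝ (range v) ↔ ∃ μ : ι → ℝ, (∀ i, 0 ≤ μ i) ∧ ∑ i, μ i • v i = x := by
  constructor
  · rw [Submodule.mem_span_range_iff_exists_fun]
    rintro ⟨c, rfl⟩
    exact ⟨fun i => c i, fun i => (c i).2, rfl⟩
  · rintro ⟨μ, hμ, rfl⟩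
    exact Submodule.sum_mem _ fun i _ =>
      (hull ℝ _).smul_mem (hμ i) (subset_hull (mem_range_self i))

lemma setOf_nonneg_combination_eq_hull_range {ι : Type*} [Fintype ι] (v : ι → E) :
    {x | ∃ μ : ι → ℝ, (∀ i, 0 ≤ μ i) ∧ x = ∑ i, μ i • v i} = hull ℝ (range v) := by
  ext x
  simp only [SetLike.mem_coe, mem_hull_range_iff_s11, eq_comm]
  rfl

/-- Exchange step of the conic Carathéodory theorem: subtract the largest multiple of the
relation `∑ g a • a = 0` that keeps all coefficients nonnegative. -/
lemma exists_mem_hull_erase [DecidableEq E] {s : Finset E} {g : E → ℝ}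
    (hg : ∑ a ∈ s, g a • a = 0) (hpos : ∃ a ∈ s, 0 < g a) {x : E}
    (hx : x ∈ hull ℝ (s : Set E)) : ∃ a ∈ s, x ∈ hull ℝ (s.erase a : Set E) := by
  obtain ⟨μ, hμ, rfl⟩ := mem_hull_finset_iff.1 hx
  obtain ⟨a₀, ha₀, hmin⟩ := (s.filter (0 < g ·)).exists_min_image (fun a => μ a / g a)
    (by simpa [Finset.filter_nonempty_iff] using hpos)
  obtain ⟨ha₀s, hga₀⟩ := Finset.mem_filter.1 ha₀
  set t := μ a₀ / g a₀
  have ht : 0 ≤ t := div_nonneg (hμ a₀ ha₀s) hga₀.le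
  have hν : ∀ a ∈ s, 0 ≤ μ a - t * g a := by
    intro a ha
    rcases le_or_gt (g a) 0 with hga | hga
    · nlinarith [hμ a ha]
    · have := (le_div_iff₀ hga).1 (hmin a (Finset.mem_filter.2 ⟨ha, hga⟩))
      linarith
  refine ⟨a₀, ha₀s, mem_hull_finset_iff.2 ⟨fun a => μ a - t * g a,
    fun a ha => hν a (Finset.mem_of_mem_erase ha), ?_⟩⟩
  have hνa₀ : μ a₀ - t * g a₀ = 0 := by
    simp only [t, div_mul_cancel₀ _ hga₀.ne', sub_self]
  rw [Finset.sum_erase _ (by simp only [hνa₀, zero_smul])]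
  simp only [sub_smul, mul_smul, Finset.sum_sub_distrib, ← Finset.smul_sum, hg, smul_zero,
    sub_zero]

theorem exists_linearIndepOn_of_mem_hull (s : Finset E) {x : E}
    (hx : x ∈ hull ℝ (s : Set E)) :
    ∃ t ⊆ s, LinearIndepOn ℝ id (t : Set E) ∧ x ∈ hull ℝ (t : Set E) := by
  classical
  induction s using Finset.strongInduction with
  | H s ih =>
    by_cases hli : LinearIndepOn ℝ id (s : Set E)
    · exact ⟨s, subset_rfl, hli, hx⟩
    obtain ⟨g, hg, b, hb, hgb⟩ := not_linearIndepOn_finset_iff.1 hli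
    have hrel : ∃ g' : E → ℝ, ∑ a ∈ s, g' a • a = 0 ∧ ∃ a ∈ s, 0 < g' a := by
      rcases hgb.lt_or_gt with hneg | hpos
      · exact ⟨-g, by simpa [neg_smul] using hg, b, hb, by simpa using hneg⟩
      · exact ⟨g, hg, b, hb, hpos⟩
    obtain ⟨g', hg', hpos⟩ := hrel
    obtain ⟨a, ha, hxa⟩ := exists_mem_hull_erase hg' hpos hx
    obtain ⟨t, hts, htli, hxt⟩ := ih _ (Finset.erase_ssubset ha) hxa
    exact ⟨t, hts.trans (Finset.erase_subset a s), htli, hxt⟩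

lemma nonneg_of_mem_hull (φ : E →ₗ[ℝ] ℝ) {G : Set E} (hG : ∀ g ∈ G, 0 ≤ φ g) {y : E}
    (hy : y ∈ hull ℝ G) : 0 ≤ φ y := by
  induction hy using Submodule.span_induction with
  | mem g hg => exact hG g hg
  | zero => simp
  | add x y _ _ hx hy => rw [map_add]; exact add_nonneg hx hy
  | smul c x _ hx =>
    change 0 ≤ φ ((c : ℝ) • x)
    rw [map_smul, smul_eq_mul]
    exact mul_nonneg c.2 hx

lemma convex_diff_zero_of_salient {K : PointedCone ℝ E} (hK : (K : ConvexCone ℝ E).Salient) :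
    Convex ℝ ((K : Set E) \ {0}) := by
  rintro x ⟨hxK, hx0⟩ y ⟨hyK, hy0⟩ a b ha hb hab
  refine ⟨K.convex hxK hyK ha hb hab, fun h => ?_⟩
  rcases ha.eq_or_lt with rfl | ha
  · rw [zero_add] at hab
    simp [hab, hy0] at h
  · exact hK (a • x) (K.smul_mem ha.le hxK) (smul_ne_zero ha.ne' hx0)
      (by rw [neg_eq_of_add_eq_zero_right h]; exact K.smul_mem hb hyK)

variable [TopologicalSpace E] [IsTopologicalAddGroup E] [ContinuousSMul ℝ E]

lemma isClosed_hull_range_of_linearIndependent_s11 [T2Space E] {ι : Type*} [Fintype ι]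
    {v : ι → E} (hv : LinearIndependent ℝ v) : IsClosed (hull ℝ (range v) : Set E) := by
  have himage : (hull ℝ (range v) : Set E) = Fintype.linearCombination ℝ v '' Ici 0 := by
    ext x
    simp only [SetLike.mem_coe, mem_hull_range_iff_s11, mem_image, mem_Ici,
      Fintype.linearCombination_apply, Pi.le_def, Pi.zero_apply]
  rw [himage]
  exact (LinearMap.isClosedEmbedding_of_injective (LinearMap.ker_eq_bot.2
    (linearIndependent_iff_injective_fintypeLinearCombination.1 hv))).isClosedMap _ isClosed_Ici

theorem isClosed_hull_of_finite [T2Space E] {S : Set E} (hS : S.Finite) :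
    IsClosed (hull ℝ S : Set E) := by
  classical
  lift S to Finset E using hS
  have hunion : (hull ℝ (S : Set E) : Set E) =
      ⋃ (t : Finset E) (_ : t ∈ S.powerset.filter fun u : Finset E =>
        LinearIndepOn ℝ id (u : Set E)), (hull ℝ (t : Set E) : Set E) := by
    refine Subset.antisymm (fun x hx => ?_) (iUnion₂_subset fun t ht => ?_)
    · obtain ⟨t, hts, hli, hxt⟩ := exists_linearIndepOn_of_mem_hull S hx
      exact mem_biUnion (Finset.mem_filter.2 ⟨Finset.mem_powerset.2 hts, hli⟩) hxt
    · exact Submodule.span_mono (Finset.coe_subset.2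
        (Finset.mem_powerset.1 (Finset.mem_filter.1 ht).1))
  rw [hunion]
  refine isClosed_biUnion_finset fun t ht => ?_
  rw [← Subtype.range_coe (s := (t : Set E))]
  exact isClosed_hull_range_of_linearIndependent_s11 (Finset.mem_filter.1 ht).2

/-- The compact convex hull of the nonzero generators misses the closed cone `D`. -/
theorem exists_strongDual_pos_of_disjoint [LocallyConvexSpace ℝ E] {G : Set E} (hG : G.Finite)
    (hsal : (hull ℝ G : ConvexCone ℝ E).Salient) (D : ProperCone ℝ E)
    (hdisj : Disjoint (hull ℝ G) D.toPointedCone) :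
    ∃ f : StrongDual ℝ E, (∀ g ∈ G, g ≠ 0 → 0 < f g) ∧ ∀ v ∈ D, f v ≤ 0 := by
  have hT : convexHull ℝ (G \ {0}) ⊆ (hull ℝ G : Set E) \ {0} :=
    convexHull_min (sdiff_subset_sdiff_left subset_hull) (convex_diff_zero_of_salient hsal)
  obtain ⟨f, hfD, hfT⟩ := D.hyperplane_separation (convex_convexHull ℝ _)
    (hG.sdiff.isCompact_convexHull (𝕜 := ℝ)) (disjoint_left.2 fun a haT haD =>
      (hT haT).2 (Submodule.disjoint_def.1 hdisj a (hT haT).1 haD))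
  refine ⟨-f, fun g hg hg0 => ?_, fun v hv => ?_⟩
  · simpa using hfT g (subset_convexHull ℝ _ ⟨hg, hg0⟩)
  · simpa using hfD v hv

end PointedCone

open PointedCone

lemma coneHull_eq_hull {E : Type*} [AddCommGroup E] [Module ℝ E] (S : Set E) :
    coneHull S = hull ℝ S := by
  ext x
  constructor
  · rintro ⟨k, μ, f, hμ, hf, rfl⟩
    exact Submodule.sum_mem _ fun i _ => (hull ℝ _).smul_mem (hμ i) (subset_hull (hf i))
  · rw [SetLike.mem_coe, Submodule.mem_span_set']
    rintro ⟨k, c, f, rfl⟩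
    exact ⟨k, fun i => c i, fun i => f i, fun i => (c i).2, fun i => (f i).2, rfl⟩

theorem eq_zero_of_mem_hull_image_of_maximal {M N : Type*} [AddCommGroup M] [Module ℝ M]
    [AddCommGroup N] [Module ℝ N] (L : M →ₗ[ℝ] N) (K : PointedCone ℝ M) {C : Set N}
    {S : Set M} (hSK : S ⊆ K) (hmax : ∀ s ∈ S, ({L s} + (C \ {0})) ∩ L '' K = ∅) {a : N}
    (ha : a ∈ hull ℝ (L '' S)) (haC : a ∈ C) : a = 0 := by
  have hle : hull ℝ (L '' S) ≤ (hull ℝ S).map L :=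
    Submodule.span_le.2 (image_subset_iff.2 fun s hs => mem_map.2 ⟨s, subset_hull hs, rfl⟩)
  obtain ⟨y, hy, rfl⟩ := mem_map.1 (hle ha)
  rcases S.eq_empty_or_nonempty with rfl | ⟨s, hs⟩
  · simp_all
  by_contra hy0
  refine (eq_empty_iff_forall_notMem.1 (hmax s hs)) (L (s + y))
    ⟨?_, s + y, K.add_mem (hSK hs) (Submodule.span_le.2 hSK hy), rfl⟩
  rw [map_add]
  exact add_mem_add rfl ⟨haC, hy0⟩

theorem setOf_pos_subset_interior_dual {ι : Type*} [Fintype ι] {G : Set (ι → ℝ)}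
    (hG : G.Finite) :
    {z | ∀ g ∈ G, g ≠ 0 → 0 < z ⬝ᵥ g} ⊆ interior {z | ∀ y ∈ hull ℝ G, 0 ≤ z ⬝ᵥ y} := by
  refine interior_maximal (fun z hz y hy => ?_) ?_
  · refine nonneg_of_mem_hull (dotProductBilin ℝ ℝ z) (fun g hg => ?_) hy
    rcases eq_or_ne g 0 with rfl | hg0
    · simp
    · simpa using (hz g hg hg0).le
  · have hinter : {z : ι → ℝ | ∀ g ∈ G, g ≠ 0 → 0 < z ⬝ᵥ g} =
        ⋂ g ∈ G \ {0}, {z | 0 < z ⬝ᵥ g} := by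
      ext z
      simp [and_imp]
    rw [hinter]
    exact hG.sdiff.isOpen_biInter fun g _ =>
      isOpen_lt continuous_const (continuous_id.dotProduct continuous_const)

theorem le_of_mem_convexHull_add_hull_sub {E : Type*} [AddCommGroup E] [Module ℝ E]
    (φ : E →ₗ[ℝ] ℝ) {S V C : Set E} {c : ℝ} (hS : ∀ y ∈ S, φ y ≤ c)
    (hV : ∀ v ∈ V, φ v ≤ 0) (hC : ∀ y ∈ C, 0 ≤ φ y) {y : E}
    (hy : y ∈ convexHull ℝ S + hull ℝ V - C) : φ y ≤ c := by
  obtain ⟨_, ⟨a, ha, b, hb, rfl⟩, d, hd, rfl⟩ := hy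
  have ha' : φ a ≤ c := convexHull_min hS (convex_halfSpace_le φ.isLinear c) ha
  have hb' : 0 ≤ -φ b := nonneg_of_mem_hull (-φ) (fun v hv => by simpa using hV v hv) hb
  simp only [map_sub, map_add]
  linarith [hC d hd]

theorem exists_interior_weight_with_optimal_solution_general
    (n m q : ℕ)
    (P : Matrix (Fin n) (Fin q) ℝ) (A : Matrix (Fin m) (Fin n) ℝ)
    (C : Set (Fin q → ℝ))
    (hCpoly : ∃ (k : ℕ) (Y : Fin k → Fin q → ℝ),
      C = {v | ∃ μ : Fin k → ℝ, (∀ i, 0 ≤ μ i) ∧ v = ∑ i, μ i • Y i})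
    (hCpointed : ∀ v ∈ C, -v ∈ C → v = 0)
    (X : Set (Fin n → ℝ))
    (Xh : Set (Fin n → ℝ)) (hXh : Xh = {x | A.mulVec x ≤ 0 ∧ 0 ≤ x})
    (hsol : ∃ Xbar Xbarh : Set (Fin n → ℝ),
      Xbar.Finite ∧ Xbar.Nonempty ∧ Xbar ⊆ X ∧
      Xbarh.Finite ∧ Xbarh ⊆ Xh \ {0} ∧
      (convexHull ℝ (P.transpose.mulVec '' Xbar)
          + coneHull (P.transpose.mulVec '' Xbarh) - C
        = (P.transpose.mulVec '' X) - C) ∧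
      (∀ xbar ∈ Xbar,
        ({P.transpose.mulVec xbar} + (C \ {0})) ∩ (P.transpose.mulVec '' X) = ∅) ∧
      (∀ xh ∈ Xbarh,
        ({P.transpose.mulVec xh} + (C \ {0})) ∩ (P.transpose.mulVec '' Xh) = ∅)) :
    ∃ w ∈ interior {z : Fin q → ℝ | ∀ y ∈ C, 0 ≤ z ⬝ᵥ y},
      ∃ xbar ∈ X, ∀ x ∈ X,
        w ⬝ᵥ P.transpose.mulVec x ≤ w ⬝ᵥ P.transpose.mulVec xbar := by
  obtain ⟨k, Y, rfl⟩ := hCpoly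
  rw [setOf_nonneg_combination_eq_hull_range] at hCpointed hsol ⊢
  obtain ⟨Xbar, Xbarh, hXbar, hXbar_ne, hXbarX, hXbarh, hXbarhXh, hsup, -, hmaxh⟩ := hsol
  let K : PointedCone ℝ (Fin n → ℝ) := (positive ℝ _).comap (-A.mulVecLin) ⊓ positive ℝ _
  obtain rfl : Xh = K := by
    subst hXh
    ext x
    simp [K]
  have hdisj : Disjoint (hull ℝ (range Y)) (hull ℝ (Pᵀ.mulVecLin '' Xbarh)) :=
    Submodule.disjoint_def.2 fun a haY haV => eq_zero_of_mem_hull_image_of_maximal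
      Pᵀ.mulVecLin K (fun x hx => (hXbarhXh hx).1) hmaxh haV haY
  obtain ⟨f, hfY, hfV⟩ := exists_strongDual_pos_of_disjoint (finite_range Y)
    (fun x hx hx0 hneg => hx0 (hCpointed x hx hneg))
    ⟨hull ℝ (Pᵀ.mulVecLin '' Xbarh), isClosed_hull_of_finite (hXbarh.image _)⟩ hdisj
  set w := (dotProductEquiv ℝ (Fin q)).symm (f : Module.Dual ℝ (Fin q → ℝ))
  have hw : ∀ y, w ⬝ᵥ y = f y := fun y => by
    rw [← dotProductEquiv_apply_apply, LinearEquiv.apply_symm_apply]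
    rfl
  have hw_int : w ∈ interior {z | ∀ y ∈ hull ℝ (range Y), 0 ≤ z ⬝ᵥ y} :=
    setOf_pos_subset_interior_dual (finite_range Y) fun g hg hg0 => (hw g).symm ▸ hfY g hg hg0
  obtain ⟨xbar, hxbar, hmax⟩ := Xbar.exists_max_image (fun x => f (Pᵀ *ᵥ x)) hXbar hXbar_ne
  refine ⟨w, hw_int, xbar, hXbarX hxbar, fun x hx => ?_⟩
  have hx' : Pᵀ *ᵥ x ∈ Pᵀ.mulVec '' X - hull ℝ (range Y) :=
    ⟨_, mem_image_of_mem _ hx, 0, zero_mem _, sub_zero _⟩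
  rw [← hsup, coneHull_eq_hull] at hx'
  rw [hw, hw]
  exact le_of_mem_convexHull_add_hull_sub (f : (Fin q → ℝ) →ₗ[ℝ] ℝ)
    (forall_mem_image.2 hmax) (fun v hv => hfV v (subset_hull hv))
    (fun y hy => hw y ▸ interior_subset hw_int y hy) hx'

/-- If (P) has a solution (a finite supremizer consisting of maximizers), then there
exist w in the interior of C⁺ and x̄ ∈ X such that x̄ is optimal for (P1(w)). -/
theorem exists_interior_weight_with_optimal_solution
    (n m q : ℕ) (hn : 0 < n) (hm : 0 < m) (hq : 0 < q)
    (P : Matrix (Fin n) (Fin q) ℝ) (A : Matrix (Fin m) (Fin n) ℝ) (b : Fin m → ℝ)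
    (C : Set (Fin q → ℝ))
    (hC0 : {(0 : Fin q → ℝ)} ⊂ C) (hCuniv : C ≠ Set.univ)
    (hCpoly : ∃ (k : ℕ) (Y : Fin k → Fin q → ℝ),
      C = {v | ∃ μ : Fin k → ℝ, (∀ i, 0 ≤ μ i) ∧ v = ∑ i, μ i • Y i})
    (hCpointed : ∀ v ∈ C, -v ∈ C → v = 0)
    (hCsolid : (interior C).Nonempty)
    (X : Set (Fin n → ℝ)) (hX : X = {x | A.mulVec x ≤ b ∧ 0 ≤ x})
    (Xh : Set (Fin n → ℝ)) (hXh : Xh = {x | A.mulVec x ≤ 0 ∧ 0 ≤ x})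
    (hsol : ∃ Xbar Xbarh : Set (Fin n → ℝ),
      Xbar.Finite ∧ Xbar.Nonempty ∧ Xbar ⊆ X ∧
      Xbarh.Finite ∧ Xbarh ⊆ Xh \ {0} ∧
      (convexHull ℝ (P.transpose.mulVec '' Xbar)
          + coneHull (P.transpose.mulVec '' Xbarh) - C
        = (P.transpose.mulVec '' X) - C) ∧
      (∀ xbar ∈ Xbar,
        ({P.transpose.mulVec xbar} + (C \ {0})) ∩ (P.transpose.mulVec '' X) = ∅) ∧
      (∀ xh ∈ Xbarh,
        ({P.transpose.mulVec xh} + (C \ {0})) ∩ (P.transpose.mulVec '' Xh) = ∅)) :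
    ∃ w ∈ interior {z : Fin q → ℝ | ∀ y ∈ C, 0 ≤ z ⬝ᵥ y},
      ∃ xbar ∈ X, ∀ x ∈ X,
        w ⬝ᵥ P.transpose.mulVec x ≤ w ⬝ᵥ P.transpose.mulVec xbar :=
  exists_interior_weight_with_optimal_solution_general n m q P A C hCpoly hCpointed X Xh hXh hsol
end

section
/- Assume b ≥ 0 (so 0 ∈ X), fix c in the interior of the dual cone C⁺, and let y¹, …, yᵗ ∈ ℝ^q be generating vectors of C (C = cone{y¹, …, yᵗ}) assembled as the columns of the q×t matrix Y. Consider the linear program (P0): minimize bᵀu over (u, w) ∈ ℝ^m × ℝ^q subject to Aᵀu − Pw ≥ 0, Yᵀ(w − c) ≥ 0, and u ≥ 0. Then (P) has a maximizer if and only if (P0) has an optimal solution. -/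
/-!
If `(u, w)` is feasible for (P₀), then `Yᵀ(w - c) ≥ 0` and `c ∈ int C⁺` make `wᵀv > 0` on
`C \ {0}`, and weak duality bounds the scalarized problem `max wᵀPᵀx` over `X` by `bᵀu`; any
optimal `x̄` of this linear program is a maximizer of (P). Conversely, if (P₀) were infeasible,
Farkas' lemma would give `x ≥ 0`, `λ ≥ 0` with `Ax ≤ 0` and `Pᵀx = Yλ`, `cᵀYλ > 0`: a direction
along which every point of `X` can be improved. So at a maximizer (P₀) is feasible, and its
objective is bounded below by `0`, hence attains its minimum.

Farkas' lemma and the attainment of bounded linear programs both rest on the closedness of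
finitely generated cones, which follows from the conic Carathéodory theorem.
-/

open Matrix Pointwise

section ClosedCone

variable {κ : Type*} [Fintype κ]

lemma exists_nonneg_sub_smul_eq_zero {ν α : κ → ℝ} (hν : 0 ≤ ν) (hα : ∃ i, 0 < α i) :
    ∃ r : ℝ, 0 ≤ ν - r • α ∧ ∃ i, 0 < α i ∧ (ν - r • α) i = 0 := by
  classical
  obtain ⟨i₀, hi₀, hmin⟩ := (Finset.univ.filter fun i => 0 < α i).exists_min_image
    (fun i => ν i / α i) (by simpa [Finset.Nonempty] using hα)
  simp only [Finset.mem_filter, Finset.mem_univ, true_and] at hi₀ hmin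
  refine ⟨ν i₀ / α i₀, fun i => ?_, i₀, hi₀, by simp [div_mul_cancel₀ _ hi₀.ne']⟩
  simp only [Pi.zero_apply, Pi.sub_apply, Pi.smul_apply, smul_eq_mul, sub_nonneg]
  rcases lt_or_ge 0 (α i) with hαi | hαi
  · exact (le_div_iff₀ hαi).1 (hmin i hαi)
  · exact (mul_nonpos_of_nonneg_of_nonpos (div_nonneg (hν i₀) hi₀.le) hαi).trans (hν i)

variable {E : Type*} [AddCommGroup E] [Module ℝ E]

/-- Conic Carathéodory; the `Disjoint` condition says that `F` is injective on the vectors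
supported where `ν` is. -/
lemma exists_nonneg_map_eq_disjoint_ker (F : (κ → ℝ) →ₗ[ℝ] E) {μ : κ → ℝ} (hμ : 0 ≤ μ) :
    ∃ ν, 0 ≤ ν ∧ F ν = F μ ∧
      Disjoint (LinearMap.ker F) (Submodule.pi {i | ν i = 0} fun _ => ⊥) := by
  classical
  suffices ∀ (s : Finset κ) (ν : κ → ℝ), 0 ≤ ν → (∀ i ∉ s, ν i = 0) → ∃ ν', 0 ≤ ν' ∧ F ν' = F ν ∧
      Disjoint (LinearMap.ker F) (Submodule.pi {i | ν' i = 0} fun _ => ⊥) from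
    this Finset.univ μ hμ (by simp)
  intro s
  induction s using Finset.strongInduction with
  | H s ih =>
  intro ν hν hs
  by_cases hdisj : Disjoint (LinearMap.ker F) (Submodule.pi {i | ν i = 0} fun _ => ⊥)
  · exact ⟨ν, hν, rfl, hdisj⟩
  obtain ⟨α, hαF, hαν, hα⟩ :
      ∃ α : κ → ℝ, F α = 0 ∧ (∀ i, ν i = 0 → α i = 0) ∧ ∃ i, 0 < α i := by
    obtain ⟨α, hαF, hαν, hα0⟩ :
        ∃ α : κ → ℝ, F α = 0 ∧ (∀ i, ν i = 0 → α i = 0) ∧ α ≠ 0 := by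
      simpa [Submodule.disjoint_def] using hdisj
    obtain ⟨i, hi⟩ := Function.ne_iff.1 hα0
    rcases hi.lt_or_gt with hneg | hpos
    · exact ⟨-α, by simp [hαF], fun j hj => by simp [hαν j hj], i, by simpa using hneg⟩
    · exact ⟨α, hαF, hαν, i, hpos⟩
  obtain ⟨r, hr, i₀, hαi₀, hi₀⟩ := exists_nonneg_sub_smul_eq_zero hν hα
  have hνi₀ : i₀ ∈ s := by
    by_contra h
    exact hαi₀.ne' (hαν i₀ (hs i₀ h))
  obtain ⟨ν', hν', hFν', hdisj'⟩ := ih (s.erase i₀) (Finset.erase_ssubset hνi₀) (ν - r • α) hr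
    (fun i hi => by
      rcases eq_or_ne i i₀ with rfl | hne
      · exact hi₀
      · have hνi := hs i fun h => hi (Finset.mem_erase.2 ⟨hne, h⟩)
        have hαi : α i = 0 := hαν i hνi
        simp [hνi, hαi])
  exact ⟨ν', hν', by simp [hFν', hαF], hdisj'⟩

variable [TopologicalSpace E] [IsTopologicalAddGroup E] [ContinuousSMul ℝ E] [T2Space E]

theorem isClosed_image_nonneg (F : (κ → ℝ) →ₗ[ℝ] E) : IsClosed (F '' Set.Ici 0) := by
  let U (s : Set κ) : Submodule ℝ (κ → ℝ) := Submodule.pi s fun _ => ⊥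
  have hpiece (s : Set κ) (hs : Disjoint (LinearMap.ker F) (U s)) :
      IsClosed ((F ∘ₗ (U s).subtype) '' {a | 0 ≤ (a : κ → ℝ)}) := by
    have hker : LinearMap.ker (F ∘ₗ (U s).subtype) = ⊥ := by
      rw [LinearMap.ker_comp, ← Submodule.disjoint_iff_comap_eq_bot, disjoint_comm]
      exact hs
    exact (LinearMap.isClosedEmbedding_of_injective hker).isClosedMap _
      (isClosed_Ici.preimage continuous_subtype_val)
  have : F '' Set.Ici 0 = ⋃ (s : Set κ) (_ : Disjoint (LinearMap.ker F) (U s)),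
      (F ∘ₗ (U s).subtype) '' {a | 0 ≤ (a : κ → ℝ)} := by
    ext z
    simp only [Set.mem_image, Set.mem_Ici, Set.mem_iUnion, LinearMap.coe_comp,
      Function.comp_apply, Submodule.coe_subtype, Subtype.exists]
    constructor
    · rintro ⟨μ, hμ, rfl⟩
      obtain ⟨ν, hν, hFν, hdisj⟩ := exists_nonneg_map_eq_disjoint_ker F hμ
      exact ⟨_, hdisj, ν, fun i hi => hi, hν, hFν⟩
    · rintro ⟨s, hs, a, haU, ha, rfl⟩
      exact ⟨a, ha, rfl⟩
  rw [this]
  exact isClosed_iUnion_of_finite fun s => isClosed_iUnion_of_finite (hpiece s)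

theorem isClosed_add_image_nonneg (W : Submodule ℝ E) [FiniteDimensional ℝ W]
    (F : (κ → ℝ) →ₗ[ℝ] E) : IsClosed ((W : Set E) + F '' Set.Ici 0) := by
  have : IsClosed (W : Set E) := W.closed_of_finiteDimensional
  have : (W : Set E) + F '' Set.Ici 0 = W.mkQ ⁻¹' ((W.mkQ ∘ₗ F) '' Set.Ici 0) := by
    ext z
    simp only [Set.mem_add, Set.mem_image, Set.mem_Ici, Set.mem_preimage, LinearMap.coe_comp,
      Function.comp_apply, SetLike.mem_coe]
    constructor
    · rintro ⟨w, hw, _, ⟨μ, hμ, rfl⟩, rfl⟩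
      exact ⟨μ, hμ, by simp [(Submodule.Quotient.mk_eq_zero W).2 hw]⟩
    · rintro ⟨μ, hμ, hz⟩
      refine ⟨z - F μ, ?_, F μ, ⟨μ, hμ, rfl⟩, sub_add_cancel z (F μ)⟩
      exact (Submodule.Quotient.eq W).1 hz.symm
  rw [this]
  exact (isClosed_image_nonneg _).preimage W.continuous_mkQ

end ClosedCone

section LinearProgramming

variable {V ι : Type*} [AddCommGroup V] [Module ℝ V] [Fintype ι]

theorem exists_farkas_certificate (L : V →ₗ[ℝ] ι → ℝ) (β : ι → ℝ) (h : ¬∃ x, L x ≤ β) :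
    ∃ μ : ι → ℝ, 0 ≤ μ ∧ (∀ x, μ ⬝ᵥ L x = 0) ∧ μ ⬝ᵥ β < 0 := by
  classical
  let K : ProperCone ℝ (ι → ℝ) :=
    ⟨((LinearMap.range L : Submodule ℝ (ι → ℝ)) : PointedCone ℝ (ι → ℝ)) ⊔
        PointedCone.positive ℝ (ι → ℝ), by
      simpa [Submodule.coe_sup] using isClosed_add_image_nonneg (LinearMap.range L) LinearMap.id⟩
  have hmem : ∀ x s, 0 ≤ s → L x + s ∈ K := fun x s hs =>
    Submodule.add_mem_sup (by simp) hs
  have hβ : β ∉ K := by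
    rintro hβ
    obtain ⟨_, ⟨x, rfl⟩, s, hs, hβ⟩ := Submodule.mem_sup.1 hβ
    exact h ⟨x, hβ ▸ le_add_of_nonneg_right hs⟩
  obtain ⟨f, hfK, hfβ⟩ := K.hyperplane_separation_point hβ
  set μ := (dotProductEquiv ℝ ι).symm f.toLinearMap
  have hf (z : ι → ℝ) : f z = μ ⬝ᵥ z :=
    (LinearMap.congr_fun ((dotProductEquiv ℝ ι).apply_symm_apply f.toLinearMap) z).symm
  refine ⟨μ, fun i => ?_, fun x => ?_, hf β ▸ hfβ⟩
  · simpa [hf] using hfK _ (hmem 0 (Pi.single i 1) (Pi.single_nonneg.2 zero_le_one))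
  · have h₁ := hfK _ (hmem x 0 le_rfl)
    have h₂ := hfK _ (hmem (-x) 0 le_rfl)
    simp only [add_zero, map_neg, hf, dotProduct_neg] at h₁ h₂
    linarith

theorem exists_isMaxOn_of_bddAbove (L : V →ₗ[ℝ] ι → ℝ) (β : ι → ℝ) (φ : V →ₗ[ℝ] ℝ)
    (hne : ∃ x, L x ≤ β) (hbdd : BddAbove (φ '' {x | L x ≤ β})) :
    ∃ x, L x ≤ β ∧ IsMaxOn φ {x | L x ≤ β} x := by
  set S := {x | L x ≤ β}
  -- `(β, r) ∈ K` iff `r = φ x` for some `x ∈ S`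
  set K : Set ((ι → ℝ) × ℝ) :=
    (LinearMap.range (L.prod φ) : Set _) + LinearMap.inl ℝ (ι → ℝ) ℝ '' Set.Ici 0
  have hK : IsClosed {r | (β, r) ∈ K} :=
    (isClosed_add_image_nonneg _ _).preimage (continuous_const.prodMk continuous_id)
  have hvalues : φ '' S ⊆ {r | (β, r) ∈ K} := by
    rintro _ ⟨x, hx, rfl⟩
    refine Set.mem_add.2
      ⟨L.prod φ x, ⟨x, rfl⟩, _, ⟨β - L x, Set.mem_Ici.2 (sub_nonneg.2 hx), rfl⟩, ?_⟩
    simp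
  obtain ⟨_, ⟨x, rfl⟩, _, ⟨s, hs, rfl⟩, hx⟩ := Set.mem_add.1
    (closure_minimal hvalues hK (csSup_mem_closure (Set.Nonempty.image φ hne) hbdd))
  obtain ⟨hLx, hφx⟩ := Prod.ext_iff.1 hx
  simp only [LinearMap.prod_apply, Function.prod_apply, LinearMap.coe_inl, Prod.mk_add_mk,
    add_zero] at hLx hφx
  refine ⟨x, hLx ▸ le_add_of_nonneg_right hs, fun y hy => ?_⟩
  exact hφx ▸ le_csSup hbdd ⟨y, hy, rfl⟩

end LinearProgramming

section Scalarization

open Topology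

variable {κ ι : Type*} [Fintype ι]

lemma dotProduct_pos_of_mem_interior_dual {C : Set (ι → ℝ)} {c : ι → ℝ}
    (hc : c ∈ interior {z | ∀ v ∈ C, 0 ≤ z ⬝ᵥ v}) {v : ι → ℝ} (hv : v ∈ C) (hv0 : v ≠ 0) :
    0 < c ⬝ᵥ v := by
  have hnear : ∀ᶠ r in 𝓝 (0 : ℝ), ∀ v' ∈ C, 0 ≤ (c - r • v) ⬝ᵥ v' :=
    ((Continuous.tendsto' (by fun_prop) 0 c (by simp)).eventually
      (mem_interior_iff_mem_nhds.1 hc))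
  obtain ⟨r, hr, hrpos⟩ :=
    ((hnear.filter_mono nhdsWithin_le_nhds).and self_mem_nhdsWithin).exists (f := 𝓝[>] 0)
  have hvv : 0 < v ⬝ᵥ v := by simpa using (dotProduct_star_self_pos_iff (v := v)).2 hv0
  have hrv := hr v hv
  rw [sub_dotProduct, smul_dotProduct, smul_eq_mul, sub_nonneg] at hrv
  exact (mul_pos hrpos hvv).trans_le hrv

lemma dotProduct_nonneg_of_mem_coneHull {y : κ → ι → ℝ} {z v : ι → ℝ}
    (hz : ∀ l, 0 ≤ y l ⬝ᵥ z) (hv : v ∈ coneHull (Set.range y)) : 0 ≤ v ⬝ᵥ z := by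
  obtain ⟨k, μ, f, hμ, hf, rfl⟩ := hv
  rw [sum_dotProduct]
  refine Finset.sum_nonneg fun i _ => ?_
  obtain ⟨l, hl⟩ := hf i
  rw [smul_dotProduct, ← hl]
  exact mul_nonneg (hμ i) (hz l)

lemma inter_eq_empty_of_isMaxOn {α : Type*} {f : α → ι → ℝ} {X : Set α} {C : Set (ι → ℝ)}
    {w : ι → ℝ} (hw : ∀ v ∈ C, v ≠ 0 → 0 < w ⬝ᵥ v) {x : α}
    (hx : IsMaxOn (fun x => w ⬝ᵥ f x) X x) : ({f x} + (C \ {0})) ∩ f '' X = ∅ := by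
  refine Set.eq_empty_of_forall_notMem ?_
  rintro _ ⟨⟨_, rfl, v, ⟨hvC, hv0⟩, rfl⟩, x', hx', hfx'⟩
  have h := isMaxOn_iff.1 hx x' hx'
  simp only [hfx', dotProduct_add] at h
  linarith [hw v hvC hv0]

end Scalarization

section P0

variable {n m q t : ℕ} (A : Matrix (Fin m) (Fin n) ℝ) (P : Matrix (Fin n) (Fin q) ℝ)
  (y : Fin t → Fin q → ℝ) (c : Fin q → ℝ)

def IsP0Feasible (u : Fin m → ℝ) (w : Fin q → ℝ) : Prop :=
  P *ᵥ w ≤ Aᵀ *ᵥ u ∧ (∀ i, 0 ≤ y i ⬝ᵥ (w - c)) ∧ 0 ≤ u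

def p0ConstraintMap : (Fin m → ℝ) × (Fin q → ℝ) →ₗ[ℝ] (Fin n ⊕ Fin t ⊕ Fin m → ℝ) where
  toFun z := Sum.elim (P *ᵥ z.2 - Aᵀ *ᵥ z.1) (Sum.elim (-(of y *ᵥ z.2)) (-z.1))
  map_add' z z' := by
    ext (i | l | j) <;> simp [mulVec_add] <;> abel
  map_smul' r z := by
    ext (i | l | j) <;> simp [mulVec_smul, mul_sub]

def p0Bound : Fin n ⊕ Fin t ⊕ Fin m → ℝ := Sum.elim 0 (Sum.elim (-(of y *ᵥ c)) 0)

def primalConstraintMap : (Fin n → ℝ) →ₗ[ℝ] (Fin m ⊕ Fin n → ℝ) where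
  toFun x := Sum.elim (A *ᵥ x) (-x)
  map_add' x x' := by
    ext (i | j) <;> simp [mulVec_add]; abel
  map_smul' r x := by
    ext (i | j) <;> simp [mulVec_smul]

variable {A P y c}

lemma p0ConstraintMap_le_p0Bound_iff {u : Fin m → ℝ} {w : Fin q → ℝ} :
    p0ConstraintMap A P y (u, w) ≤ p0Bound y c ↔ IsP0Feasible A P y c u w := by
  simp [p0ConstraintMap, p0Bound, IsP0Feasible, Pi.le_def, Sum.forall, dotProduct_sub, mulVec]

lemma sumElim_dotProduct_p0ConstraintMap (x : Fin n → ℝ) (κ : Fin t → ℝ) (s : Fin m → ℝ)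
    (u : Fin m → ℝ) (w : Fin q → ℝ) :
    Sum.elim x (Sum.elim κ s) ⬝ᵥ p0ConstraintMap A P y (u, w)
      = (x ᵥ* P - κ ᵥ* of y) ⬝ᵥ w - (A *ᵥ x + s) ⬝ᵥ u := by
  simp only [p0ConstraintMap, mulVec_transpose, LinearMap.coe_mk, AddHom.coe_mk,
    sumElim_dotProduct_sumElim, dotProduct_sub, dotProduct_mulVec, dotProduct_neg, sub_dotProduct,
    add_dotProduct]
  have : x ⬝ᵥ u ᵥ* A = A *ᵥ x ⬝ᵥ u := by
    rw [dotProduct_comm, ← dotProduct_mulVec, dotProduct_comm]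
  rw [this]
  ring

lemma primalConstraintMap_le_iff {b : Fin m → ℝ} {x : Fin n → ℝ} :
    primalConstraintMap A x ≤ Sum.elim b 0 ↔ A *ᵥ x ≤ b ∧ 0 ≤ x := by
  simp [primalConstraintMap, Pi.le_def, Sum.forall]

lemma IsP0Feasible.dotProduct_le {u : Fin m → ℝ} {w : Fin q → ℝ} (h : IsP0Feasible A P y c u w)
    {b : Fin m → ℝ} {x : Fin n → ℝ} (hAx : A *ᵥ x ≤ b) (hx : 0 ≤ x) :
    w ⬝ᵥ Pᵀ *ᵥ x ≤ b ⬝ᵥ u :=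
  calc w ⬝ᵥ Pᵀ *ᵥ x = P *ᵥ w ⬝ᵥ x := by rw [dotProduct_mulVec, vecMul_transpose]
    _ ≤ Aᵀ *ᵥ u ⬝ᵥ x := dotProduct_le_dotProduct_of_nonneg_right h.1 hx
    _ = u ⬝ᵥ A *ᵥ x := by rw [mulVec_transpose, dotProduct_mulVec]
    _ ≤ u ⬝ᵥ b := dotProduct_le_dotProduct_of_nonneg_left hAx h.2.2
    _ = b ⬝ᵥ u := dotProduct_comm u b

theorem exists_improving_direction_of_not_isP0Feasible (h : ¬∃ u w, IsP0Feasible A P y c u w) :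
    ∃ (x : Fin n → ℝ) (κ : Fin t → ℝ), 0 ≤ x ∧ 0 ≤ κ ∧ A *ᵥ x ≤ 0 ∧
      Pᵀ *ᵥ x = κ ᵥ* of y ∧ 0 < c ⬝ᵥ κ ᵥ* of y := by
  obtain ⟨μ, hμ, hμL, hμβ⟩ := exists_farkas_certificate (p0ConstraintMap A P y) (p0Bound y c)
    fun ⟨⟨u, w⟩, hz⟩ => h ⟨u, w, p0ConstraintMap_le_p0Bound_iff.1 hz⟩
  set x := μ ∘ Sum.inl
  set κ := μ ∘ Sum.inr ∘ Sum.inl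
  set s := μ ∘ Sum.inr ∘ Sum.inr
  have hμ' : μ = Sum.elim x (Sum.elim κ s) := by ext (i | l | j) <;> rfl
  have hμL' (u : Fin m → ℝ) (w : Fin q → ℝ) :
      (x ᵥ* P - κ ᵥ* of y) ⬝ᵥ w - (A *ᵥ x + s) ⬝ᵥ u = 0 := by
    rw [← sumElim_dotProduct_p0ConstraintMap, ← hμ']
    exact hμL (u, w)
  have hPx : x ᵥ* P = κ ᵥ* of y := by
    have := hμL' 0 (x ᵥ* P - κ ᵥ* of y)
    rwa [dotProduct_zero, sub_zero, dotProduct_self_eq_zero, sub_eq_zero] at this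
  have hAx : A *ᵥ x + s = 0 := by
    have := hμL' (A *ᵥ x + s) 0
    rwa [dotProduct_zero, zero_sub, neg_eq_zero, dotProduct_self_eq_zero] at this
  refine ⟨x, κ, fun i => hμ _, fun l => hμ _, ?_, by rwa [mulVec_transpose], ?_⟩
  · rw [eq_neg_of_add_eq_zero_left hAx]
    exact neg_nonpos.2 fun j => hμ _
  · simpa [hμ', p0Bound, sumElim_dotProduct_sumElim, dotProduct_mulVec, dotProduct_comm c]
      using hμβ

theorem exists_isP0Feasible_of_maximizer {b : Fin m → ℝ} {C : Set (Fin q → ℝ)}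
    (hC : coneHull (Set.range y) ⊆ C) {x₀ : Fin n → ℝ} (hx₀ : x₀ ∈ {x | A *ᵥ x ≤ b ∧ 0 ≤ x})
    (hmax : ({Pᵀ *ᵥ x₀} + (C \ {0})) ∩ Pᵀ.mulVec '' {x | A *ᵥ x ≤ b ∧ 0 ≤ x} = ∅) :
    ∃ u w, IsP0Feasible A P y c u w := by
  by_contra hinf
  obtain ⟨x, κ, hx, hκ, hAx, hPx, hcv⟩ := exists_improving_direction_of_not_isP0Feasible hinf
  have hvC : κ ᵥ* of y ∈ C := hC ⟨t, κ, y, hκ, fun l => ⟨l, rfl⟩, vecMul_eq_sum κ (of y)⟩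
  have hv0 : κ ᵥ* of y ≠ 0 := fun h => by simp [h] at hcv
  have hAx₀x : A *ᵥ (x₀ + x) ≤ b := by
    rw [mulVec_add]
    exact (add_le_add hx₀.1 hAx).trans_eq (add_zero b)
  refine Set.eq_empty_iff_forall_notMem.1 hmax (Pᵀ *ᵥ (x₀ + x))
    ⟨⟨_, rfl, _, ⟨hvC, hv0⟩, ?_⟩, x₀ + x, ⟨hAx₀x, add_nonneg hx₀.2 hx⟩, rfl⟩
  simp [mulVec_add, hPx]

theorem exists_isP0Feasible_minimizing {b : Fin m → ℝ} (hb : 0 ≤ b)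
    (hfeas : ∃ u w, IsP0Feasible A P y c u w) :
    ∃ u w, IsP0Feasible A P y c u w ∧
      ∀ u' w', IsP0Feasible A P y c u' w' → b ⬝ᵥ u ≤ b ⬝ᵥ u' := by
  obtain ⟨u₀, w₀, h₀⟩ := hfeas
  obtain ⟨⟨u, w⟩, hfeas, hmax⟩ := exists_isMaxOn_of_bddAbove (p0ConstraintMap A P y) (p0Bound y c)
    (-(dotProductEquiv ℝ (Fin m) b ∘ₗ LinearMap.fst ℝ _ _))
    ⟨(u₀, w₀), p0ConstraintMap_le_p0Bound_iff.2 h₀⟩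
    ⟨0, by
      rintro _ ⟨⟨u, w⟩, h, rfl⟩
      simpa using dotProduct_nonneg_of_nonneg hb (p0ConstraintMap_le_p0Bound_iff.1 h).2.2⟩
  refine ⟨u, w, p0ConstraintMap_le_p0Bound_iff.1 hfeas, fun u' w' h' => ?_⟩
  simpa using isMaxOn_iff.1 hmax (u', w') (p0ConstraintMap_le_p0Bound_iff.2 h')

theorem exists_maximizer_of_isP0Feasible {b : Fin m → ℝ} (hb : 0 ≤ b) {C : Set (Fin q → ℝ)}
    (hC : C ⊆ coneHull (Set.range y)) (hc : c ∈ interior {z | ∀ v ∈ C, 0 ≤ z ⬝ᵥ v})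
    {u : Fin m → ℝ} {w : Fin q → ℝ} (hfeas : IsP0Feasible A P y c u w) :
    ∃ x₀ ∈ {x | A *ᵥ x ≤ b ∧ 0 ≤ x},
      ({Pᵀ *ᵥ x₀} + (C \ {0})) ∩ Pᵀ.mulVec '' {x | A *ᵥ x ≤ b ∧ 0 ≤ x} = ∅ := by
  have hw (v : Fin q → ℝ) (hv : v ∈ C) (hv0 : v ≠ 0) : 0 < w ⬝ᵥ v := by
    have h₁ := dotProduct_nonneg_of_mem_coneHull hfeas.2.1 (hC hv)
    have h₂ := dotProduct_pos_of_mem_interior_dual hc hv hv0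
    rw [dotProduct_sub, dotProduct_comm v, dotProduct_comm v] at h₁
    linarith
  obtain ⟨x₀, hx₀, hmax⟩ := exists_isMaxOn_of_bddAbove (primalConstraintMap A) (Sum.elim b 0)
    (dotProductEquiv ℝ (Fin q) w ∘ₗ Pᵀ.mulVecLin)
    ⟨0, primalConstraintMap_le_iff.2 ⟨by simpa using hb, le_rfl⟩⟩
    ⟨b ⬝ᵥ u, by
      rintro _ ⟨x, hx, rfl⟩
      have hx := primalConstraintMap_le_iff.1 hx
      exact hfeas.dotProduct_le hx.1 hx.2⟩
  simp only [primalConstraintMap_le_iff] at hx₀ hmax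
  exact ⟨x₀, hx₀, inter_eq_empty_of_isMaxOn hw hmax⟩

end P0

theorem has_maximizer_iff_P0_has_optimal_solution_general
    (n m q t : ℕ)
    (P : Matrix (Fin n) (Fin q) ℝ) (A : Matrix (Fin m) (Fin n) ℝ) (b : Fin m → ℝ)
    (hb : 0 ≤ b)
    (C : Set (Fin q → ℝ))
    (y : Fin t → Fin q → ℝ) (hCgen : C = coneHull (Set.range y))
    (X : Set (Fin n → ℝ)) (hX : X = {x | A.mulVec x ≤ b ∧ 0 ≤ x})
    (c : Fin q → ℝ) (hc : c ∈ interior {z : Fin q → ℝ | ∀ v ∈ C, 0 ≤ z ⬝ᵥ v}) :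
    (∃ xbar ∈ X,
        ({P.transpose.mulVec xbar} + (C \ {0})) ∩ (P.transpose.mulVec '' X) = ∅)
      ↔ ∃ (u : Fin m → ℝ) (w : Fin q → ℝ),
          (P.mulVec w ≤ A.transpose.mulVec u ∧ (∀ i, 0 ≤ y i ⬝ᵥ (w - c)) ∧ 0 ≤ u) ∧
          ∀ (u' : Fin m → ℝ) (w' : Fin q → ℝ),
            (P.mulVec w' ≤ A.transpose.mulVec u' ∧ (∀ i, 0 ≤ y i ⬝ᵥ (w' - c)) ∧ 0 ≤ u')
            → b ⬝ᵥ u ≤ b ⬝ᵥ u' := by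
  subst hX
  constructor
  · rintro ⟨x₀, hx₀, hmax⟩
    exact exists_isP0Feasible_minimizing hb
      (exists_isP0Feasible_of_maximizer hCgen.ge hx₀ hmax)
  · rintro ⟨u, w, hfeas, -⟩
    exact exists_maximizer_of_isP0Feasible hb hCgen.le hc hfeas

/-- Assume b ≥ 0, c ∈ int C⁺ and C = cone{y¹,…,yᵗ}. Then (P) has a maximizer iff
the auxiliary linear program (P₀): minimize bᵀu subject to Aᵀu − Pw ≥ 0,
Yᵀ(w − c) ≥ 0, u ≥ 0, has an optimal solution. -/
theorem has_maximizer_iff_P0_has_optimal_solution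
    (n m q t : ℕ) (hn : 0 < n) (hm : 0 < m) (hq : 0 < q) (ht : 0 < t)
    (P : Matrix (Fin n) (Fin q) ℝ) (A : Matrix (Fin m) (Fin n) ℝ) (b : Fin m → ℝ)
    (hb : 0 ≤ b)
    (C : Set (Fin q → ℝ))
    (hC0 : {(0 : Fin q → ℝ)} ⊂ C) (hCuniv : C ≠ Set.univ)
    (y : Fin t → Fin q → ℝ) (hCgen : C = coneHull (Set.range y))
    (hCpointed : ∀ v ∈ C, -v ∈ C → v = 0)
    (hCsolid : (interior C).Nonempty)
    (X : Set (Fin n → ℝ)) (hX : X = {x | A.mulVec x ≤ b ∧ 0 ≤ x})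
    (c : Fin q → ℝ) (hc : c ∈ interior {z : Fin q → ℝ | ∀ v ∈ C, 0 ≤ z ⬝ᵥ v}) :
    (∃ xbar ∈ X,
        ({P.transpose.mulVec xbar} + (C \ {0})) ∩ (P.transpose.mulVec '' X) = ∅)
      ↔ ∃ (u : Fin m → ℝ) (w : Fin q → ℝ),
          (P.mulVec w ≤ A.transpose.mulVec u ∧ (∀ i, 0 ≤ y i ⬝ᵥ (w - c)) ∧ 0 ≤ u) ∧
          ∀ (u' : Fin m → ℝ) (w' : Fin q → ℝ),
            (P.mulVec w' ≤ A.transpose.mulVec u' ∧ (∀ i, 0 ≤ y i ⬝ᵥ (w' - c)) ∧ 0 ≤ u')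
            → b ⬝ᵥ u ≤ b ⬝ᵥ u' :=
  has_maximizer_iff_P0_has_optimal_solution_general n m q t P A b hb C y hCgen X hX c hc
end

section
/- Assume q ≥ 2 and fix c in the interior of C with c_q = 1. Then the affine map λ ↦ w(λ) restricts to a bijection from Λ onto W whose inverse is w ↦ (w₁, …, w_{q−1}); moreover, it maps the (topological) interior of Λ in ℝ^{q−1} onto the relative interior of W, i.e., λ ∈ int Λ implies w(λ) ∈ ri W, and w ∈ ri W implies (w₁, …, w_{q−1}) ∈ int Λ. -/
/-! Since `c_q = 1`, the map `w` is an affine chart of the hyperplane `{x | x ⬝ᵥ c = 1}` with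
inverse `Fin.init`, and `Λ = w ⁻¹' W`; so `W = w '' Λ`, and `w` carries `int Λ` onto `ri W` as soon
as the affine span of `W` is the whole hyperplane, i.e. as soon as `Λ` has nonempty interior.
For that, pointedness makes `C ∖ {0}` convex, so `0` is strictly separated from the convex hull of
the nonzero generators of `C`; the functionals positive on those finitely many generators form an
open subset of `C⁺` which meets the hyperplane because `c ≠ 0`. -/

open Set

theorem PointedCone.coe_hull_range {E κ : Type*} [AddCommGroup E] [Module ℝ E] [Fintype κ]
    (Y : κ → E) :
    (PointedCone.hull ℝ (range Y) : Set E) =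
      {v | ∃ μ : κ → ℝ, (∀ i, 0 ≤ μ i) ∧ v = ∑ i, μ i • Y i} := by
  ext v
  simp only [SetLike.mem_coe, Submodule.mem_span_range_iff_exists_fun]
  constructor
  · rintro ⟨μ, rfl⟩
    exact ⟨fun i => μ i, fun i => (μ i).2, by simp only [Nonneg.coe_smul]⟩
  · rintro ⟨μ, hμ, rfl⟩
    exact ⟨fun i => ⟨μ i, hμ i⟩, by simp only [Nonneg.mk_smul]⟩

section Cone
variable {ι : Type*} [Fintype ι]

theorem ConvexCone.Salient.convex_diff_zero {E : Type*} [AddCommGroup E] [Module ℝ E]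
    {K : ConvexCone ℝ E} (hK : K.Salient) : Convex ℝ ((K : Set E) \ {0}) := by
  rintro x ⟨hxK, hx0⟩ y ⟨hyK, hy0⟩ a b ha hb hab
  refine ⟨K.convex hxK hyK ha hb hab, fun hsum => ?_⟩
  rcases ha.eq_or_lt with rfl | ha
  · simp_all
  rcases hb.eq_or_lt with rfl | hb
  · simp_all
  exact hK _ (K.smul_mem ha hxK) (smul_ne_zero ha.ne' hx0)
    (neg_eq_of_add_eq_zero_right hsum ▸ K.smul_mem hb hyK)

theorem ConvexCone.Salient.exists_dotProduct_pos [DecidableEq ι] {K : ConvexCone ℝ (ι → ℝ)}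
    (hK : K.Salient) {T : Set (ι → ℝ)} (hT : T.Finite) (hTK : T ⊆ (K : Set (ι → ℝ)) \ {0}) :
    ∃ z, ∀ y ∈ T, 0 < z ⬝ᵥ y := by
  have h0 : (0 : ι → ℝ) ∉ convexHull ℝ T := fun h =>
    (convexHull_min hTK hK.convex_diff_zero h).2 rfl
  obtain ⟨f, u, hf0, hfT⟩ := geometric_hahn_banach_point_closed (convex_convexHull ℝ T)
    (hT.isCompact_convexHull (𝕜 := ℝ)).isClosed h0
  refine ⟨(dotProductEquiv ℝ ι).symm f.toLinearMap, fun y hy => ?_⟩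
  have hfy : f y = (dotProductEquiv ℝ ι).symm f.toLinearMap ⬝ᵥ y := by
    conv_lhs => rw [← ContinuousLinearMap.coe_coe,
      ← (dotProductEquiv ℝ ι).apply_symm_apply f.toLinearMap]
    rfl
  rw [map_zero] at hf0
  linarith [hfT y (subset_convexHull ℝ T hy)]

theorem eq_zero_or_dotProduct_pos_of_mem_hull {s : Set (ι → ℝ)} {z : ι → ℝ}
    (hz : ∀ y ∈ s \ {0}, 0 < z ⬝ᵥ y) {v : ι → ℝ} (hv : v ∈ PointedCone.hull ℝ s) :
    v = 0 ∨ 0 < z ⬝ᵥ v := by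
  induction hv using Submodule.span_induction with
  | mem y hy => exact (eq_or_ne y 0).imp_right fun hy0 => hz y ⟨hy, hy0⟩
  | zero => exact .inl rfl
  | add v w _ _ hv hw =>
    rcases hv with rfl | hv
    · simpa using hw
    rcases hw with rfl | hw
    · simpa using Or.inr hv
    exact .inr (by rw [dotProduct_add]; positivity)
  | smul t v _ hv =>
    rw [← Nonneg.coe_smul]
    rcases t.2.eq_or_lt with ht | ht
    · left; rw [← ht, zero_smul]
    rcases hv with rfl | hv
    · simp
    exact .inr (by rw [dotProduct_smul, smul_eq_mul]; positivity)

theorem exists_mem_interior_dual_dotProduct_eq_one [DecidableEq ι] {s : Set (ι → ℝ)}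
    (hs : s.Finite) (hsal : (PointedCone.hull ℝ s : ConvexCone ℝ (ι → ℝ)).Salient)
    {c : ι → ℝ} (hc : c ∈ PointedCone.hull ℝ s) (hc0 : c ≠ 0) :
    ∃ z ∈ interior {z | ∀ v ∈ PointedCone.hull ℝ s, 0 ≤ z ⬝ᵥ v}, z ⬝ᵥ c = 1 := by
  set U := {z : ι → ℝ | ∀ y ∈ s \ {0}, 0 < z ⬝ᵥ y}
  have hU : IsOpen U := by
    simp only [U, ofPred_forall]
    exact hs.sdiff.isOpen_biInter fun y _ => isOpen_lt continuous_const
      (continuous_id.dotProduct continuous_const)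
  have hUdual : U ⊆ {z | ∀ v ∈ PointedCone.hull ℝ s, 0 ≤ z ⬝ᵥ v} := fun z hz v hv =>
    (eq_zero_or_dotProduct_pos_of_mem_hull hz hv).elim (fun h => by simp [h]) le_of_lt
  obtain ⟨z, hz⟩ := hsal.exists_dotProduct_pos hs.sdiff
    (sdiff_subset_sdiff_left (PointedCone.subset_hull (R := ℝ)))
  have hzc : 0 < z ⬝ᵥ c := (eq_zero_or_dotProduct_pos_of_mem_hull hz hc).resolve_left hc0
  refine ⟨(z ⬝ᵥ c)⁻¹ • z, interior_maximal hUdual hU fun y hy => ?_, ?_⟩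
  · rw [smul_dotProduct, smul_eq_mul]
    exact mul_pos (inv_pos.2 hzc) (hz y hy)
  · rw [smul_dotProduct, smul_eq_mul, inv_mul_cancel₀ hzc.ne']

end Cone

section
variable {𝕜 E V P : Type*} [Ring 𝕜] [TopologicalSpace E] [AddCommGroup V] [Module 𝕜 V]
  [TopologicalSpace P] [AddTorsor V P]

theorem intrinsicInterior_eq_image_interior_preimage {W : Set P} (f : E → P)
    (e : E ≃ₜ affineSpan 𝕜 W) (he : ∀ x, (e x : P) = f x) :
    intrinsicInterior 𝕜 W = f '' interior (f ⁻¹' W) := by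
  have hf : f = Subtype.val ∘ e := funext fun x => (he x).symm
  rw [intrinsicInterior, hf, preimage_comp, ← e.preimage_interior, image_comp,
    e.image_preimage]
end

section
variable {E V P : Type*} [NormedAddCommGroup E] [NormedSpace ℝ E]
  [AddCommGroup V] [Module ℝ V] [AddTorsor V P]

theorem AffineMap.affineSpan_image_eq_map_top (f : E →ᵃ[ℝ] P) {s : Set E}
    (hs : (interior s).Nonempty) : affineSpan ℝ (f '' s) = (⊤ : AffineSubspace ℝ E).map f := by
  rw [← AffineSubspace.map_span, top_unique ((isOpen_interior.affineSpan_eq_top hs).symm.trans_le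
    (affineSpan_mono ℝ interior_subset))]

theorem AffineMap.intrinsicInterior_image_of_leftInverse [TopologicalSpace P] (f : E →ᵃ[ℝ] P)
    {g : P → E} (hf : Continuous f) (hg : Continuous g) (hgf : Function.LeftInverse g f) {s : Set E}
    (hs : (interior s).Nonempty) : intrinsicInterior ℝ (f '' s) = f '' interior s := by
  have hspan := f.affineSpan_image_eq_map_top hs
  have hmem (x : E) : f x ∈ affineSpan ℝ (f '' s) :=
    hspan ▸ AffineSubspace.mem_map_of_mem f (AffineSubspace.mem_top ℝ E x)
  let e : E ≃ₜ affineSpan ℝ (f '' s) :=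
    { toFun x := ⟨f x, hmem x⟩
      invFun y := g y
      left_inv := hgf
      right_inv := by
        rintro ⟨y, hy⟩
        rw [hspan] at hy
        obtain ⟨x, -, rfl⟩ := hy
        exact Subtype.ext (congrArg f (hgf x))
      continuous_toFun := hf.subtype_mk _
      continuous_invFun := hg.comp continuous_subtype_val }
  rw [intrinsicInterior_eq_image_interior_preimage f e fun _ => rfl,
    hgf.injective.preimage_image]
end

section HyperplaneChart
variable {n : ℕ} (c : Fin (n + 1) → ℝ)

def hyperplaneChartLinear : (Fin n → ℝ) →ₗ[ℝ] (Fin (n + 1) → ℝ) where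
  toFun lam := Fin.snoc lam (-∑ i, c (Fin.castSucc i) * lam i)
  map_add' lam mu := by
    ext j
    induction j using Fin.lastCases with
    | last => simp [mul_add, Finset.sum_add_distrib]; ring
    | cast => simp
  map_smul' t lam := by
    ext j
    induction j using Fin.lastCases with
    | last => simp [mul_left_comm _ t, ← Finset.mul_sum]
    | cast => simp

def hyperplaneChart : (Fin n → ℝ) →ᵃ[ℝ] (Fin (n + 1) → ℝ) where
  toFun lam := Fin.snoc lam (1 - ∑ i, c (Fin.castSucc i) * lam i)
  linear := hyperplaneChartLinear c
  map_vadd' lam mu := by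
    ext j
    induction j using Fin.lastCases with
    | last => simp [hyperplaneChartLinear, mul_add, Finset.sum_add_distrib]; ring
    | cast => simp [hyperplaneChartLinear]

variable {c}

@[simp]
theorem init_hyperplaneChart (lam : Fin n → ℝ) : Fin.init (hyperplaneChart c lam) = lam :=
  Fin.init_snoc _ _

theorem hyperplaneChart_dotProduct (hc : c (Fin.last n) = 1) (lam : Fin n → ℝ) :
    hyperplaneChart c lam ⬝ᵥ c = 1 := by
  simp [hyperplaneChart, dotProduct, Fin.sum_univ_castSucc, hc, mul_comm]

theorem hyperplaneChart_init (hc : c (Fin.last n) = 1) {x : Fin (n + 1) → ℝ}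
    (hx : x ⬝ᵥ c = 1) : hyperplaneChart c (Fin.init x) = x := by
  rw [dotProduct, Fin.sum_univ_castSucc, hc, mul_one] at hx
  conv_rhs => rw [← Fin.snoc_init_self x]
  simp only [hyperplaneChart, AffineMap.coe_mk]
  congr 1
  simp only [Fin.init, mul_comm (c _)]
  linarith

theorem range_hyperplaneChart (hc : c (Fin.last n) = 1) :
    range (hyperplaneChart c) = {x | x ⬝ᵥ c = 1} :=
  Subset.antisymm (range_subset_iff.2 (hyperplaneChart_dotProduct hc))
    fun _ hx => ⟨_, hyperplaneChart_init hc hx⟩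

theorem image_preimage_hyperplaneChart (hc : c (Fin.last n) = 1) (S : Set (Fin (n + 1) → ℝ)) :
    hyperplaneChart c '' (hyperplaneChart c ⁻¹' S) = {x ∈ S | x ⬝ᵥ c = 1} := by
  rw [image_preimage_eq_inter_range, range_hyperplaneChart hc]
  rfl

theorem init_mem_of_mem_image_hyperplaneChart {S : Set (Fin n → ℝ)} {x : Fin (n + 1) → ℝ}
    (hx : x ∈ hyperplaneChart c '' S) : Fin.init x ∈ S := by
  obtain ⟨lam, hlam, rfl⟩ := hx
  rwa [init_hyperplaneChart]

end HyperplaneChart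

theorem parameter_set_bijection_general
    (q' : ℕ)
    (C : Set (Fin (q' + 1) → ℝ))
    (hCpoly : ∃ (k : ℕ) (Y : Fin k → Fin (q' + 1) → ℝ),
      C = {v | ∃ μ : Fin k → ℝ, (∀ i, 0 ≤ μ i) ∧ v = ∑ i, μ i • Y i})
    (hCpointed : ∀ v ∈ C, -v ∈ C → v = 0)
    (c : Fin (q' + 1) → ℝ) (hc : c ∈ interior C) (hclast : c (Fin.last q') = 1)
    (Cplus : Set (Fin (q' + 1) → ℝ))
    (hCplus : Cplus = {z | ∀ v ∈ C, 0 ≤ z ⬝ᵥ v})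
    (W : Set (Fin (q' + 1) → ℝ)) (hW : W = {w ∈ Cplus | w ⬝ᵥ c = 1})
    (wmap : (Fin q' → ℝ) → Fin (q' + 1) → ℝ)
    (hwmap : wmap = fun lam => (Fin.snoc lam (1 - ∑ i, c (Fin.castSucc i) * lam i) : Fin (q' + 1) → ℝ))
    (Lam : Set (Fin q' → ℝ)) (hLam : Lam = {lam | wmap lam ∈ Cplus}) :
    (∀ lam ∈ Lam, wmap lam ∈ W) ∧
    (∀ w ∈ W, Fin.init w ∈ Lam) ∧
    (∀ lam ∈ Lam, Fin.init (wmap lam) = lam) ∧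
    (∀ w ∈ W, wmap (Fin.init w) = w) ∧
    (∀ lam ∈ interior Lam, wmap lam ∈ intrinsicInterior ℝ W) ∧
    (∀ w ∈ intrinsicInterior ℝ W, Fin.init w ∈ interior Lam) := by
  obtain ⟨k, Y, rfl⟩ := hCpoly
  rw [← PointedCone.coe_hull_range] at hc hCpointed hCplus
  have hf : wmap = hyperplaneChart c := hwmap
  subst hf hLam
  have hWLam : W = hyperplaneChart c '' (hyperplaneChart c ⁻¹' Cplus) := by
    rw [hW, image_preimage_hyperplaneChart hclast]
  obtain ⟨z, hz, hzc⟩ := exists_mem_interior_dual_dotProduct_eq_one (finite_range Y)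
    (fun v hv hv0 hnv => hv0 (hCpointed v hv hnv)) (interior_subset hc)
    fun h => by simp [h] at hclast
  have hcont := (hyperplaneChart c).continuous_of_finiteDimensional
  have hint : (interior (hyperplaneChart c ⁻¹' Cplus)).Nonempty :=
    ⟨Fin.init z, preimage_interior_subset_interior_preimage hcont
      (by rwa [mem_preimage, hyperplaneChart_init hclast hzc, hCplus])⟩
  have hri :
      intrinsicInterior ℝ W = hyperplaneChart c '' interior (hyperplaneChart c ⁻¹' Cplus) := by
    rw [hWLam]
    exact (hyperplaneChart c).intrinsicInterior_image_of_leftInverse hcont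
      (continuous_pi fun i => continuous_apply _) init_hyperplaneChart hint
  refine ⟨fun lam hlam => hWLam ▸ mem_image_of_mem _ hlam,
    fun w hw => init_mem_of_mem_image_hyperplaneChart (hWLam ▸ hw),
    fun lam _ => init_hyperplaneChart lam,
    fun w hw => hyperplaneChart_init hclast (hW ▸ hw).2,
    fun lam hlam => hri ▸ mem_image_of_mem _ hlam,
    fun w hw => init_mem_of_mem_image_hyperplaneChart (hri ▸ hw)⟩

/-- For q = q'+1 ≥ 2 and c ∈ int C with c_q = 1, the map λ ↦ w(λ) is a bijection
from Λ onto W with inverse w ↦ (w₁,…,w_{q-1}), mapping int Λ onto ri W. -/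
theorem parameter_set_bijection
    (q' : ℕ) (hq' : 1 ≤ q')
    (C : Set (Fin (q' + 1) → ℝ))
    (hC0 : {(0 : Fin (q' + 1) → ℝ)} ⊂ C) (hCuniv : C ≠ Set.univ)
    (hCpoly : ∃ (k : ℕ) (Y : Fin k → Fin (q' + 1) → ℝ),
      C = {v | ∃ μ : Fin k → ℝ, (∀ i, 0 ≤ μ i) ∧ v = ∑ i, μ i • Y i})
    (hCpointed : ∀ v ∈ C, -v ∈ C → v = 0)
    (hCsolid : (interior C).Nonempty)
    (c : Fin (q' + 1) → ℝ) (hc : c ∈ interior C) (hclast : c (Fin.last q') = 1)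
    (Cplus : Set (Fin (q' + 1) → ℝ))
    (hCplus : Cplus = {z | ∀ v ∈ C, 0 ≤ z ⬝ᵥ v})
    (W : Set (Fin (q' + 1) → ℝ)) (hW : W = {w ∈ Cplus | w ⬝ᵥ c = 1})
    (wmap : (Fin q' → ℝ) → Fin (q' + 1) → ℝ)
    (hwmap : wmap = fun lam => (Fin.snoc lam (1 - ∑ i, c (Fin.castSucc i) * lam i) : Fin (q' + 1) → ℝ))
    (Lam : Set (Fin q' → ℝ)) (hLam : Lam = {lam | wmap lam ∈ Cplus}) :
    (∀ lam ∈ Lam, wmap lam ∈ W) ∧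
    (∀ w ∈ W, Fin.init w ∈ Lam) ∧
    (∀ lam ∈ Lam, Fin.init (wmap lam) = lam) ∧
    (∀ w ∈ W, wmap (Fin.init w) = w) ∧
    (∀ lam ∈ interior Lam, wmap lam ∈ intrinsicInterior ℝ W) ∧
    (∀ w ∈ intrinsicInterior ℝ W, Fin.init w ∈ interior Lam) :=
  parameter_set_bijection_general q' C hCpoly hCpointed c hc hclast Cplus hCplus W hW wmap hwmap Lam
    hLam
end

section
/- Let 𝓑 be a primal feasible basis (B invertible, B⁻¹b ≥ 0), let j ∈ 𝓝 satisfy B⁻¹N e^j ≤ 0 (componentwise), and let w ∈ ℝ^q satisfy (Z_N w)_j < 0 (equivalently wᵀZ_Nᵀe^j < 0). Then the scalarized objective wᵀPᵀx is unbounded above on X: for every M ∈ ℝ there exists x ∈ X with wᵀPᵀx > M. -/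
/-!
Along the edge of the feasible region that leaves the basic solution `B⁻¹b` in the direction of the
nonbasic column `j`, the dictionary keeps the basic variables at `B⁻¹b - t B⁻¹N eʲ ≥ 0` for every
`t ≥ 0`, and the objective `wᵀPᵀx` equals `(B⁻¹b)ᵀ P_B w - t (Z_N w)_j`, which grows without bound.
-/

open Matrix

section BasisSplitting

variable {R σ κ τ : Type*} {β : κ → σ} {ν : τ → σ}

theorem exists_comp_eq_of_bijective_sumElim (hβν : Function.Bijective (Sum.elim β ν))
    (a : κ → R) (c : τ → R) : ∃ v : σ → R, v ∘ β = a ∧ v ∘ ν = c := by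
  let E := Equiv.ofBijective _ hβν
  refine ⟨Sum.elim a c ∘ E.symm, ?_, ?_⟩ <;> funext i
  · exact congrArg (Sum.elim a c) (E.symm_apply_apply (.inl i))
  · exact congrArg (Sum.elim a c) (E.symm_apply_apply (.inr i))

theorem nonneg_of_bijective_sumElim [Preorder R] [Zero R]
    (hβν : Function.Bijective (Sum.elim β ν)) {v : σ → R}
    (hβ : 0 ≤ v ∘ β) (hν : 0 ≤ v ∘ ν) : 0 ≤ v := by
  intro s
  obtain ⟨i | k, rfl⟩ := hβν.2 s
  · exact hβ i
  · exact hν k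

variable [Fintype σ] [Fintype κ] [Fintype τ]

theorem dotProduct_eq_of_bijective_sumElim [AddCommMonoid R] [Mul R]
    (hβν : Function.Bijective (Sum.elim β ν)) (u v : σ → R) :
    u ⬝ᵥ v = (u ∘ β) ⬝ᵥ (v ∘ β) + (u ∘ ν) ⬝ᵥ (v ∘ ν) := by
  rw [dotProduct, ← hβν.sum_comp, Fintype.sum_sum_type]
  rfl

theorem mulVec_eq_of_bijective_sumElim {ι : Type*} [NonUnitalNonAssocSemiring R]
    (hβν : Function.Bijective (Sum.elim β ν)) (M : Matrix ι σ R) (v : σ → R) :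
    M *ᵥ v = M.submatrix id β *ᵥ (v ∘ β) + M.submatrix id ν *ᵥ (v ∘ ν) :=
  funext fun i => dotProduct_eq_of_bijective_sumElim hβν (M i) v

variable [CommRing R]

theorem mulVec_eq_of_comp_eq_inv_mulVec_sub [DecidableEq κ]
    (hβν : Function.Bijective (Sum.elim β ν)) {M : Matrix κ σ R} {B : Matrix κ κ R}
    {N : Matrix κ τ R} (hB : B = M.submatrix id β) (hN : N = M.submatrix id ν) (hBunit : IsUnit B)
    {b : κ → R} {v : σ → R} (hv : v ∘ β = B⁻¹ *ᵥ b - (B⁻¹ * N) *ᵥ (v ∘ ν)) :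
    M *ᵥ v = b := by
  have hBB : B * B⁻¹ = 1 := mul_nonsing_inv B ((isUnit_iff_isUnit_det B).mp hBunit)
  rw [mulVec_eq_of_bijective_sumElim hβν, ← hB, ← hN, hv, mulVec_sub, mulVec_mulVec,
    mulVec_mulVec, ← Matrix.mul_assoc, hBB, one_mulVec, Matrix.one_mul, sub_add_cancel]

theorem dotProduct_eq_sub_reducedCost_of_comp_eq
    (hβν : Function.Bijective (Sum.elim β ν)) {D : Matrix κ τ R} {x₀ : κ → R} {v : σ → R}
    (hv : v ∘ β = x₀ - D *ᵥ (v ∘ ν)) (p : σ → R) :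
    v ⬝ᵥ p = x₀ ⬝ᵥ (p ∘ β) - (v ∘ ν) ⬝ᵥ (Dᵀ *ᵥ (p ∘ β) - p ∘ ν) := by
  rw [dotProduct_eq_of_bijective_sumElim hβν, hv, sub_dotProduct, dotProduct_sub,
    dotProduct_mulVec, vecMul_transpose]
  abel

end BasisSplitting

theorem exists_nonneg_mulVec_eq_dotProduct_eq_along_ray
    {R σ κ τ : Type*} [Fintype σ] [Fintype κ] [Fintype τ] [DecidableEq κ] [DecidableEq τ]
    [Field R] [LinearOrder R] [IsStrictOrderedRing R]
    {β : κ → σ} {ν : τ → σ} (hβν : Function.Bijective (Sum.elim β ν))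
    {M : Matrix κ σ R} {B : Matrix κ κ R} {N : Matrix κ τ R}
    (hB : B = M.submatrix id β) (hN : N = M.submatrix id ν) (hBunit : IsUnit B)
    {b : κ → R} (hfeas : 0 ≤ B⁻¹ *ᵥ b) {j : τ} (hcol : (B⁻¹ * N) *ᵥ Pi.single j 1 ≤ 0)
    (p : σ → R) {t : R} (ht : 0 ≤ t) :
    ∃ v : σ → R, 0 ≤ v ∧ M *ᵥ v = b ∧
      v ⬝ᵥ p = (B⁻¹ *ᵥ b) ⬝ᵥ (p ∘ β) - t * ((B⁻¹ * N)ᵀ *ᵥ (p ∘ β) - p ∘ ν) j := by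
  obtain ⟨v, hvβ, hvν⟩ := exists_comp_eq_of_bijective_sumElim hβν
    (B⁻¹ *ᵥ b - (B⁻¹ * N) *ᵥ (t • Pi.single j 1)) (t • Pi.single j 1)
  rw [← hvν] at hvβ
  refine ⟨v, nonneg_of_bijective_sumElim hβν ?_ ?_,
    mulVec_eq_of_comp_eq_inv_mulVec_sub hβν hB hN hBunit hvβ, ?_⟩
  · rw [hvβ, hvν, mulVec_smul]
    exact sub_nonneg_of_le (le_trans (smul_nonpos_of_nonneg_of_nonpos ht hcol) hfeas)
  · rw [hvν]
    exact smul_nonneg ht (Pi.single_nonneg.mpr zero_le_one)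
  · rw [dotProduct_eq_sub_reducedCost_of_comp_eq hβν hvβ, hvν, smul_dotProduct,
      single_dotProduct, one_mul, smul_eq_mul]

section SlackForm

variable {R m n q : Type*} [Fintype m] [Fintype n] [Fintype q]

theorem mulVec_le_and_nonneg_of_fromCols_one_mulVec_eq [CommRing R] [PartialOrder R]
    [IsOrderedRing R] [DecidableEq m] {A : Matrix m n R} {b : m → R} {v : n ⊕ m → R}
    (hv : 0 ≤ v) (h : fromCols A 1 *ᵥ v = b) :
    A *ᵥ (v ∘ Sum.inl) ≤ b ∧ 0 ≤ v ∘ Sum.inl := by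
  rw [← Sum.elim_comp_inl_inr v, fromCols_mulVec_sumElim, one_mulVec] at h
  exact ⟨h ▸ le_add_of_nonneg_right fun i => hv (.inr i), fun k => hv (.inl k)⟩

theorem dotProduct_transpose_mulVec_comp_inl [CommSemiring R] (P : Matrix n q R) (w : q → R)
    (v : n ⊕ m → R) :
    w ⬝ᵥ Pᵀ *ᵥ (v ∘ Sum.inl) = v ⬝ᵥ fromRows P (0 : Matrix m q R) *ᵥ w := by
  conv_rhs => rw [← Sum.elim_comp_inl_inr v]
  rw [fromRows_mulVec, zero_mulVec, sumElim_dotProduct_sumElim, dotProduct_zero, add_zero,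
    mulVec_transpose, dotProduct_comm, dotProduct_mulVec]

end SlackForm

theorem scalarized_unbounded_of_negative_reduced_cost_ray_general
    (n m q : ℕ)
    (P : Matrix (Fin n) (Fin q) ℝ) (A : Matrix (Fin m) (Fin n) ℝ) (b : Fin m → ℝ)
    (X : Set (Fin n → ℝ)) (hX : X = {x | A.mulVec x ≤ b ∧ 0 ≤ x})
    (β : Fin m → Fin n ⊕ Fin m) (ν : Fin n → Fin n ⊕ Fin m)
    (hβν : Function.Bijective (Sum.elim β ν))
    (B : Matrix (Fin m) (Fin m) ℝ)
    (hB : B = (Matrix.fromCols A (1 : Matrix (Fin m) (Fin m) ℝ)).submatrix id β)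
    (N : Matrix (Fin m) (Fin n) ℝ)
    (hN : N = (Matrix.fromCols A (1 : Matrix (Fin m) (Fin m) ℝ)).submatrix id ν)
    (PB : Matrix (Fin m) (Fin q) ℝ)
    (hPB : PB = (Matrix.fromRows P (0 : Matrix (Fin m) (Fin q) ℝ)).submatrix β id)
    (PN : Matrix (Fin n) (Fin q) ℝ)
    (hPN : PN = (Matrix.fromRows P (0 : Matrix (Fin m) (Fin q) ℝ)).submatrix ν id)
    (ZN : Matrix (Fin n) (Fin q) ℝ)
    (hZN : ZN = (B⁻¹ * N).transpose * PB - PN)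
    (hBunit : IsUnit B)
    (hfeas : 0 ≤ B⁻¹.mulVec b)
    (j : Fin n)
    (hcol : (B⁻¹ * N).mulVec (Pi.single j 1) ≤ 0)
    (w : Fin q → ℝ)
    (hZwj : ZN.mulVec w j < 0) :
    ∀ M : ℝ, ∃ x ∈ X, M < w ⬝ᵥ P.transpose.mulVec x := by
  intro M₀
  have hc : 0 < -(ZN *ᵥ w) j := by simpa using hZwj
  obtain ⟨t, ht⟩ := exists_nat_gt ((M₀ - (B⁻¹ *ᵥ b) ⬝ᵥ PB *ᵥ w) / -(ZN *ᵥ w) j)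
  obtain ⟨v, hv, hMv, hobj⟩ := exists_nonneg_mulVec_eq_dotProduct_eq_along_ray hβν hB hN hBunit
    hfeas hcol (fromRows P 0 *ᵥ w) t.cast_nonneg
  have hPBw : PB *ᵥ w = (fromRows P 0 *ᵥ w) ∘ β := by subst hPB; rfl
  have hPNw : PN *ᵥ w = (fromRows P 0 *ᵥ w) ∘ ν := by subst hPN; rfl
  have hZ : ZN *ᵥ w = (B⁻¹ * N)ᵀ *ᵥ ((fromRows P 0 *ᵥ w) ∘ β) - (fromRows P 0 *ᵥ w) ∘ ν := by
    rw [hZN, sub_mulVec, ← mulVec_mulVec, hPBw, hPNw]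
  refine ⟨v ∘ Sum.inl, hX ▸ mulVec_le_and_nonneg_of_fromCols_one_mulVec_eq hv hMv, ?_⟩
  rw [dotProduct_transpose_mulVec_comp_inl, hobj, ← hZ, ← hPBw]
  rw [div_lt_iff₀ hc] at ht
  linarith

/-- If a primal feasible dictionary has a column j with B⁻¹N e^j ≤ 0 and negative
reduced cost (Z_N w)_j < 0, then the scalarized objective wᵀPᵀx is unbounded above
on X. -/
theorem scalarized_unbounded_of_negative_reduced_cost_ray
    (n m q : ℕ) (hn : 0 < n) (hm : 0 < m) (hq : 0 < q)
    (P : Matrix (Fin n) (Fin q) ℝ) (A : Matrix (Fin m) (Fin n) ℝ) (b : Fin m → ℝ)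
    (X : Set (Fin n → ℝ)) (hX : X = {x | A.mulVec x ≤ b ∧ 0 ≤ x})
    (β : Fin m → Fin n ⊕ Fin m) (ν : Fin n → Fin n ⊕ Fin m)
    (hβν : Function.Bijective (Sum.elim β ν))
    (B : Matrix (Fin m) (Fin m) ℝ)
    (hB : B = (Matrix.fromCols A (1 : Matrix (Fin m) (Fin m) ℝ)).submatrix id β)
    (N : Matrix (Fin m) (Fin n) ℝ)
    (hN : N = (Matrix.fromCols A (1 : Matrix (Fin m) (Fin m) ℝ)).submatrix id ν)
    (PB : Matrix (Fin m) (Fin q) ℝ)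
    (hPB : PB = (Matrix.fromRows P (0 : Matrix (Fin m) (Fin q) ℝ)).submatrix β id)
    (PN : Matrix (Fin n) (Fin q) ℝ)
    (hPN : PN = (Matrix.fromRows P (0 : Matrix (Fin m) (Fin q) ℝ)).submatrix ν id)
    (ZN : Matrix (Fin n) (Fin q) ℝ)
    (hZN : ZN = (B⁻¹ * N).transpose * PB - PN)
    (hBunit : IsUnit B)
    (hfeas : 0 ≤ B⁻¹.mulVec b)
    (j : Fin n)
    (hcol : (B⁻¹ * N).mulVec (Pi.single j 1) ≤ 0)
    (w : Fin q → ℝ)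
    (hZwj : ZN.mulVec w j < 0) :
    ∀ M : ℝ, ∃ x ∈ X, M < w ⬝ᵥ P.transpose.mulVec x :=
  scalarized_unbounded_of_negative_reduced_cost_ray_general n m q P A b X hX β ν hβν B hB N hN PB
    hPB PN hPN ZN hZN hBunit hfeas j hcol w hZwj
end
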